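/- arXiv:math-ph/0509045 — 5 statements merged into one kernel-verified Lean document; each statement's English description precedes it below -/
import Mathlib

section
/- The stationary queue length Z(0) = sup_{r ≤ 0} (∑_{i=r}^{0} [α¹(i) - α²(i)])⁺ of a discrete-time M/M/1 queue with Bernoulli arrival density ρ¹ and Bernoulli service density ρ², where ρ¹ < ρ², has a geometric distribution: P(Z(0) ≥ k) = (ρ¹(1-ρ²)/(ρ²(1-ρ¹)))^k for all k ≥ 0. -/
open scoped ENNReal
open Classical

noncomputable section

/-- Stationary queue length: `Z(j) = sup_{r ≤ j} (∑_{i=r}^j (a i - s i))⁺`, valued in `ℕ∞`. -/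
def Zq (a s : ℤ → ℤ) (j : ℤ) : ℕ∞ :=
  ⨆ r ∈ Set.Iic j, ((∑ i ∈ Finset.Icc r j, (a i - s i)).toNat : ℕ∞)

/-- Departure process: `D(a,s)(j) = 1` iff `s j = 1` and `Z(j-1) + a j > 0`. -/
def Dq (a s : ℤ → ℤ) (j : ℤ) : ℤ :=
  if s j = 1 ∧ 0 < Zq a s (j - 1) + ((a j).toNat : ℕ∞) then 1 else 0

/-- Iterated departures: `Dfrom α r m` is `D^{(m+1)}(α r, α (r+1), …, α (r+m))`. -/
def Dfrom (α : ℕ → ℤ → ℤ) (r : ℕ) : ℕ → ℤ → ℤ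
  | 0 => α r
  | m + 1 => Dq (Dfrom α r m) (α (r + m + 1))

end
open MeasureTheory ProbabilityTheory

section Aux
variable {Ω : Type*} [MeasurableSpace Ω] {μ : Measure Ω}

private def Vfun (A S : ℤ → Ω → ℤ) (ω : Ω) (j : ℕ) : ℤ × ℤ := (A (-(j:ℤ)) ω, S (-(j:ℤ)) ω)

private def wsum (v : ℕ → ℤ × ℤ) (n : ℕ) : ℤ := ∑ j ∈ Finset.range n, ((v j).1 - (v j).2)

private lemma integrable_of_bounded' [IsProbabilityMeasure μ] {f : Ω → ℝ} {C : ℝ}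
    (hm : Measurable f) (hb : ∀ ω, |f ω| ≤ C) : Integrable f μ :=
  (integrable_const C).mono' hm.aestronglyMeasurable (ae_of_all _ (by simpa using hb))

private lemma meas_phiV {A S : ℤ → Ω → ℤ} (hAmeas : ∀ i, Measurable (A i))
    (hSmeas : ∀ i, Measurable (S i)) (n : ℕ) (φ : (ℕ → ℤ × ℤ) → ℝ)
    (hdep : ∀ v v' : ℕ → ℤ × ℤ, (∀ j < n, v j = v' j) → φ v = φ v') :
    Measurable (fun ω => φ (Vfun A S ω)) := by
  have h : (fun ω => φ (Vfun A S ω)) =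
      (fun g : Fin n → ℤ × ℤ => φ (fun j => if h : j < n then g ⟨j, h⟩ else (0, 0))) ∘
        (fun ω (j : Fin n) => Vfun A S ω j) := by
    funext ω
    exact hdep _ _ (fun j hj => by simp [hj])
  rw [h]
  exact (measurable_of_countable _).comp
    (measurable_pi_lambda _ fun j => ((hAmeas _).prodMk (hSmeas _)))

private lemma indep_phiV {A S : ℤ → Ω → ℤ} (hAmeas : ∀ i, Measurable (A i))
    (hSmeas : ∀ i, Measurable (S i))
    (hindep : iIndepFun (Sum.elim A S) μ)
    (n : ℕ) (φ : (ℕ → ℤ × ℤ) → ℝ) (ψ : ℤ × ℤ → ℝ)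
    (hdep : ∀ v v' : ℕ → ℤ × ℤ, (∀ j < n, v j = v' j) → φ v = φ v') :
    IndepFun (fun ω => φ (Vfun A S ω)) (fun ω => ψ (Vfun A S ω n)) μ := by
  classical
  set mL : ℕ → ℤ ⊕ ℤ := fun j => Sum.inl (-(j:ℤ)) with hmL
  set mR : ℕ → ℤ ⊕ ℤ := fun j => Sum.inr (-(j:ℤ)) with hmR
  have hmLinj : Function.Injective mL := by
    intro a b hab; simp only [hmL, Sum.inl.injEq, neg_inj, Nat.cast_inj] at hab; exact hab
  have hmRinj : Function.Injective mR := by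
    intro a b hab; simp only [hmR, Sum.inr.injEq, neg_inj, Nat.cast_inj] at hab; exact hab
  set Sf : Finset (ℤ ⊕ ℤ) :=
    ((Finset.range n).image mL) ∪ ((Finset.range n).image mR) with hSf
  set T : Finset (ℤ ⊕ ℤ) := {mL n, mR n} with hT
  have hfmeas : ∀ i, Measurable (Sum.elim A S i) := by
    rintro (x | x)
    · exact hAmeas x
    · exact hSmeas x
  have hdisj : Disjoint Sf T := by
    rw [Finset.disjoint_left]
    intro a ha hat
    rw [hSf, Finset.mem_union] at ha
    rw [hT, Finset.mem_insert, Finset.mem_singleton] at hat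
    rcases ha with ha | ha <;>
      obtain ⟨j, hj, rfl⟩ := Finset.mem_image.1 ha <;>
      rw [Finset.mem_range] at hj <;>
      rcases hat with h | h <;>
      simp only [hmL, hmR, Sum.inl.injEq, Sum.inr.injEq, neg_inj, Nat.cast_inj,
        reduceCtorEq] at h <;>
      omega
  have base := hindep.indepFun_finset Sf T hdisj hfmeas
  have hmemL : ∀ j < n, mL j ∈ Sf := fun j hj =>
    Finset.mem_union_left _ (Finset.mem_image.2 ⟨j, Finset.mem_range.2 hj, rfl⟩)
  have hmemR : ∀ j < n, mR j ∈ Sf := fun j hj =>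
    Finset.mem_union_right _ (Finset.mem_image.2 ⟨j, Finset.mem_range.2 hj, rfl⟩)
  have hmemLT : mL n ∈ T := Finset.mem_insert_self _ _
  have hmemRT : mR n ∈ T := Finset.mem_insert_of_mem (Finset.mem_singleton_self _)
  set Φ : (↥Sf → ℤ) → ℝ := fun g => φ (fun j =>
    if h1 : mL j ∈ Sf then
      if h2 : mR j ∈ Sf then (g ⟨_, h1⟩, g ⟨_, h2⟩) else (0, 0)
    else (0, 0)) with hΦ
  set Ψ : (↥T → ℤ) → ℝ := fun g =>
    ψ (g ⟨mL n, hmemLT⟩, g ⟨mR n, hmemRT⟩) with hΨ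
  have key := base.comp (measurable_of_countable Φ) (measurable_of_countable Ψ)
  have e1 : (Φ ∘ fun a (i : ↥Sf) => Sum.elim A S i a) = fun ω => φ (Vfun A S ω) := by
    funext ω
    simp only [Function.comp_apply, hΦ]
    apply hdep
    intro j hj
    rw [dif_pos (hmemL j hj), dif_pos (hmemR j hj)]
    rfl
  have e2 : (Ψ ∘ fun a (i : ↥T) => Sum.elim A S i a) = fun ω => ψ (Vfun A S ω n) := by
    funext ω; rfl
  rw [e1, e2] at key
  exact key

private lemma mul_phiV [IsProbabilityMeasure μ] {A S : ℤ → Ω → ℤ}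
    (hAmeas : ∀ i, Measurable (A i)) (hSmeas : ∀ i, Measurable (S i))
    (hindep : iIndepFun (Sum.elim A S) μ)
    (n : ℕ) (φ : (ℕ → ℤ × ℤ) → ℝ) (ψ : ℤ × ℤ → ℝ) (Cφ Cψ : ℝ)
    (hdep : ∀ v v' : ℕ → ℤ × ℤ, (∀ j < n, v j = v' j) → φ v = φ v')
    (hbφ : ∀ ω, |φ (Vfun A S ω)| ≤ Cφ) (hbψ : ∀ ω, |ψ (Vfun A S ω n)| ≤ Cψ) :
    ∫ ω, φ (Vfun A S ω) * ψ (Vfun A S ω n) ∂μ =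
      (∫ ω, φ (Vfun A S ω) ∂μ) * ∫ ω, ψ (Vfun A S ω n) ∂μ := by
  have hmψ : Measurable (fun ω => ψ (Vfun A S ω n)) :=
    (measurable_of_countable ψ).comp ((hAmeas _).prodMk (hSmeas _))
  exact (indep_phiV hAmeas hSmeas hindep n φ ψ hdep).integral_fun_mul_eq_mul_integral
    (integrable_of_bounded' (meas_phiV hAmeas hSmeas n φ hdep) hbφ).aestronglyMeasurable
    (integrable_of_bounded' hmψ hbψ).aestronglyMeasurable

private lemma exp_step [IsProbabilityMeasure μ] {A S : ℤ → Ω → ℤ} {ρ1 ρ2 : ℝ}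
    (hρ1 : 0 ≤ ρ1) (hρ2 : 0 ≤ ρ2)
    (hA01 : ∀ i ω, A i ω = 0 ∨ A i ω = 1) (hS01 : ∀ i ω, S i ω = 0 ∨ S i ω = 1)
    (hAmeas : ∀ i, Measurable (A i)) (hSmeas : ∀ i, Measurable (S i))
    (hindep : iIndepFun (Sum.elim A S) μ)
    (hAdens : ∀ i, μ {ω | A i ω = 1} = ENNReal.ofReal ρ1)
    (hSdens : ∀ i, μ {ω | S i ω = 1} = ENNReal.ofReal ρ2)
    (t : ℝ) (ht : 0 < t) (n : ℕ) :
    ∫ ω, t ^ ((Vfun A S ω n).1 - (Vfun A S ω n).2) ∂μ =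
      (1 + (t - 1) * ρ1) * (1 + (t⁻¹ - 1) * ρ2) := by
  have htne : t ≠ 0 := ne_of_gt ht
  have hsplit : (fun ω => t ^ ((Vfun A S ω n).1 - (Vfun A S ω n).2)) =
      fun ω => (if A (-(n:ℤ)) ω = 1 then t else 1) * (if S (-(n:ℤ)) ω = 1 then t⁻¹ else 1) := by
    funext ω
    rcases hA01 (-(n:ℤ)) ω with hA | hA <;> rcases hS01 (-(n:ℤ)) ω with hS | hS <;>
      simp [Vfun, hA, hS, zpow_neg, htne]
  have hgen : ∀ (B : ℤ → Ω → ℤ) (ρ : ℝ), 0 ≤ ρ → (∀ i ω, B i ω = 0 ∨ B i ω = 1) →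
      (∀ i, Measurable (B i)) → (∀ i, μ {ω | B i ω = 1} = ENNReal.ofReal ρ) → ∀ (s : ℝ),
      ∫ ω, (if B (-(n:ℤ)) ω = 1 then s else 1) ∂μ = 1 + (s - 1) * ρ := by
    intro B ρ hρ hB01 hBmeas hBdens s
    have hset : MeasurableSet {ω | B (-(n:ℤ)) ω = 1} :=
      (hBmeas _) (measurableSet_singleton 1)
    have heq : (fun ω => (if B (-(n:ℤ)) ω = 1 then s else 1)) =
        fun ω => (s - 1) * ({ω | B (-(n:ℤ)) ω = 1}.indicator 1 ω) + 1 := by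
      funext ω
      by_cases h : B (-(n:ℤ)) ω = 1 <;> simp [h, Set.indicator_apply]
    rw [heq]
    have hind : Integrable (fun ω => ({ω | B (-(n:ℤ)) ω = 1}.indicator 1 ω : ℝ)) μ :=
      (integrable_const (1:ℝ)).indicator hset
    rw [integral_add ((hind.const_mul _)) (integrable_const 1)]
    rw [integral_const_mul, integral_indicator_one hset, measureReal_def, hBdens, ENNReal.toReal_ofReal hρ]
    simp [add_comm]
  have hindAS : IndepFun (A (-(n:ℤ))) (S (-(n:ℤ))) μ := by
    have h := hindep.indepFun (i := (Sum.inl (-(n:ℤ)) : ℤ ⊕ ℤ)) (j := Sum.inr (-(n:ℤ))) (by simp)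
    exact h
  have hcomp : IndepFun (fun ω => if A (-(n:ℤ)) ω = 1 then t else 1)
      (fun ω => if S (-(n:ℤ)) ω = 1 then t⁻¹ else 1) μ :=
    hindAS.comp (measurable_of_countable (fun a : ℤ => if a = 1 then t else 1))
      (measurable_of_countable (fun a : ℤ => if a = 1 then t⁻¹ else 1))
  have hi1 : Integrable (fun ω => if A (-(n:ℤ)) ω = 1 then t else 1) μ :=
    integrable_of_bounded'
      ((measurable_of_countable (fun a : ℤ => if a = 1 then t else 1)).comp (hAmeas _))
      (C := max |t| 1) (fun ω => by split <;> simp [le_max_left, le_max_right])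
  have hi2 : Integrable (fun ω => if S (-(n:ℤ)) ω = 1 then t⁻¹ else 1) μ :=
    integrable_of_bounded'
      ((measurable_of_countable (fun a : ℤ => if a = 1 then t⁻¹ else 1)).comp (hSmeas _))
      (C := max |t⁻¹| 1) (fun ω => by split <;> simp [le_max_left, le_max_right])
  have hmul := hcomp.integral_fun_mul_eq_mul_integral hi1.aestronglyMeasurable hi2.aestronglyMeasurable
  have hmul' : ∫ ω, (if A (-(n:ℤ)) ω = 1 then t else 1) * (if S (-(n:ℤ)) ω = 1 then t⁻¹ else 1) ∂μ =
      (∫ ω, (if A (-(n:ℤ)) ω = 1 then t else 1) ∂μ) * ∫ ω, (if S (-(n:ℤ)) ω = 1 then t⁻¹ else 1) ∂μ := by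
    rw [← hmul]
  rw [hsplit, hmul', hgen A ρ1 hρ1 hA01 hAmeas hAdens t, hgen S ρ2 hρ2 hS01 hSmeas hSdens t⁻¹]
end Aux

/-- The stationary queue length `Z(0)` of the discrete-time M/M/1 queue is geometric:
`P(Z(0) ≥ k) = (ρ¹(1-ρ²)/(ρ²(1-ρ¹)))^k` for all `k ≥ 0`. -/
theorem stationary_queue_length_geometric {Ω : Type*} [MeasurableSpace Ω] (μ : Measure Ω) [IsProbabilityMeasure μ]
    (A S : ℤ → Ω → ℤ) (ρ1 ρ2 : ℝ)
    (hρ1 : 0 < ρ1) (hρ12 : ρ1 < ρ2) (hρ2 : ρ2 < 1)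
    (hA01 : ∀ i ω, A i ω = 0 ∨ A i ω = 1) (hS01 : ∀ i ω, S i ω = 0 ∨ S i ω = 1)
    (hAmeas : ∀ i, Measurable (A i)) (hSmeas : ∀ i, Measurable (S i))
    (hindep : iIndepFun (Sum.elim A S) μ)
    (hAdens : ∀ i, μ {ω | A i ω = 1} = ENNReal.ofReal ρ1)
    (hSdens : ∀ i, μ {ω | S i ω = 1} = ENNReal.ofReal ρ2) (k : ℕ) :
    μ {ω | (k : ℕ∞) ≤ Zq (fun i => A i ω) (fun i => S i ω) 0} =
      ENNReal.ofReal ((ρ1 * (1 - ρ2) / (ρ2 * (1 - ρ1))) ^ k) := by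
  classical
  rcases Nat.eq_zero_or_pos k with rfl | hk
  · simp only [Nat.cast_zero, zero_le, Set.setOf_true, pow_zero, ENNReal.ofReal_one]
    exact measure_univ
  -- basic positivity facts
  have hρ2pos : 0 < ρ2 := lt_trans hρ1 hρ12
  have hρ1lt1 : ρ1 < 1 := lt_trans hρ12 hρ2
  have h1ρ1 : 0 < 1 - ρ1 := by linarith
  have h1ρ2 : 0 < 1 - ρ2 := by linarith
  set lam : ℝ := ρ2 * (1 - ρ1) / (ρ1 * (1 - ρ2)) with hlam
  have hlam1 : 1 < lam := by
    rw [hlam, lt_div_iff₀ (by positivity)]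
    nlinarith
  have hlampos : 0 < lam := lt_trans one_pos hlam1
  have hlamkey : ρ1 * (1 - ρ2) * lam = ρ2 * (1 - ρ1) := by
    rw [hlam]; field_simp
  set lam' : ℝ := Real.sqrt lam with hlam'
  have hlam'sq : lam' * lam' = lam := Real.mul_self_sqrt hlampos.le
  have hlam'1 : 1 < lam' := by
    have := Real.sqrt_lt_sqrt (le_of_lt one_pos) hlam1
    rwa [Real.sqrt_one] at this
  have hlam'pos : 0 < lam' := lt_trans one_pos hlam'1
  have hlam'lt : lam' < lam := by nlinarith
  -- the one-step transform
  set phi : ℝ → ℝ := fun t => (1 + (t - 1) * ρ1) * (1 + (t⁻¹ - 1) * ρ2) with hphi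
  have hphikey : ∀ t : ℝ, 0 < t →
      phi t = 1 + (t - 1) * (ρ1 * (1 - ρ2) * t - ρ2 * (1 - ρ1)) / t := by
    intro t ht
    rw [hphi]
    field_simp
    ring
  have hphilam : phi lam = 1 := by
    rw [hphikey lam hlampos, hlamkey]
    simp
  have hphi'lt : phi lam' < 1 := by
    rw [hphikey lam' hlam'pos]
    have hnum : ρ1 * (1 - ρ2) * lam' - ρ2 * (1 - ρ1) < 0 := by nlinarith
    have h2 : 0 < lam' - 1 := by linarith
    have : (lam' - 1) * (ρ1 * (1 - ρ2) * lam' - ρ2 * (1 - ρ1)) / lam' < 0 := by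
      apply div_neg_of_neg_of_pos _ hlam'pos
      exact mul_neg_of_pos_of_neg h2 hnum
    linarith
  have hphi'pos : 0 < phi lam' := by
    rw [hphi]
    have hinv : 0 < lam'⁻¹ := by positivity
    have h1 : 0 < 1 + (lam' - 1) * ρ1 := by nlinarith
    have h2 : 0 < 1 + (lam'⁻¹ - 1) * ρ2 := by nlinarith [inv_lt_one_of_one_lt₀ hlam'1]
    exact mul_pos h1 h2
  -- the random walk
  set W : ℕ → Ω → ℤ := fun n ω => wsum (Vfun A S ω) n with hWdef
  have hWmeas : ∀ n, Measurable (W n) := by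
    intro n
    have h : W n = fun ω => ∑ j ∈ Finset.range n, (A (-(j:ℤ)) ω - S (-(j:ℤ)) ω) := rfl
    rw [h]
    exact Finset.measurable_sum _ (fun j _ => (hAmeas _).sub (hSmeas _))
  have hWstep : ∀ n ω, W (n+1) ω = W n ω + ((Vfun A S ω n).1 - (Vfun A S ω n).2) := by
    intro n ω
    exact Finset.sum_range_succ _ n
  have hW0 : ∀ ω, W 0 ω = 0 := fun ω => Finset.sum_range_zero _
  have hX1 : ∀ j ω, (Vfun A S ω j).1 - (Vfun A S ω j).2 ≤ 1 := by
    intro j ω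
    rcases hA01 (-(j:ℤ)) ω with hA | hA <;> rcases hS01 (-(j:ℤ)) ω with hS | hS <;>
      simp [Vfun, hA, hS]
  have hWub : ∀ n ω, W n ω ≤ n := by
    intro n ω
    induction n with
    | zero => simp [hW0]
    | succ n ih =>
      rw [hWstep n ω]
      push_cast
      have := hX1 n ω
      omega
  -- dependence of wsum on initial coordinates
  have hwdep : ∀ (n : ℕ) (v v' : ℕ → ℤ × ℤ), (∀ j < n, v j = v' j) →
      ∀ m ≤ n, wsum v m = wsum v' m := by
    intro n v v' hvv m hm
    exact Finset.sum_congr rfl fun j hj => by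
      rw [hvv j (lt_of_lt_of_le (Finset.mem_range.1 hj) hm)]
  -- the good sets
  set G : ℕ → Set Ω := fun n => {ω | ∀ m ≤ n, W m ω < (k:ℤ)} with hGdef
  have hGmem : ∀ n ω, ω ∈ G n ↔ ∀ m ≤ n, W m ω < (k:ℤ) := by
    intro n ω
    rw [hGdef]
    exact Iff.rfl
  have hGmeas : ∀ n, MeasurableSet (G n) := by
    intro n
    have h : G n = ⋂ m ∈ Set.Iic n, W m ⁻¹' Set.Iio (k:ℤ) := by
      ext ω
      simp only [hGmem, Set.mem_iInter, Set.mem_preimage, Set.mem_Iio, Set.mem_Iic]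
    rw [h]
    exact MeasurableSet.biInter (Set.to_countable _)
      (fun m _ => (hWmeas m) measurableSet_Iio)
  have hGsub : ∀ n, G (n+1) ⊆ G n := by
    intro n ω hω
    rw [hGmem] at hω ⊢
    exact fun m hm => hω m (le_trans hm (Nat.le_succ n))
  -- the stopped exponential
  set Y : ℕ → Ω → ℝ := fun n ω => (if ω ∈ G n then (1:ℝ) else 0) * lam ^ (W n ω) with hYdef
  have hdepY : ∀ n (v v' : ℕ → ℤ × ℤ), (∀ j < n, v j = v' j) →
      (if ∀ m ≤ n, wsum v m < (k:ℤ) then (1:ℝ) else 0) * lam ^ (wsum v n) =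
      (if ∀ m ≤ n, wsum v' m < (k:ℤ) then (1:ℝ) else 0) * lam ^ (wsum v' n) := by
    intro n v v' hvv
    have h1 := hwdep n v v' hvv
    have h2 : (∀ m ≤ n, wsum v m < (k:ℤ)) ↔ (∀ m ≤ n, wsum v' m < (k:ℤ)) := by
      constructor <;> intro H m hm
      · rw [← h1 m hm]; exact H m hm
      · rw [h1 m hm]; exact H m hm
    rw [h1 n le_rfl, if_congr h2 rfl rfl]
  have hYb : ∀ n ω, |Y n ω| ≤ lam ^ (n:ℤ) := by
    intro n ω
    rw [hYdef]
    simp only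
    rw [abs_mul]
    have hz : 0 < lam ^ (W n ω) := zpow_pos hlampos _
    have hb : lam ^ (W n ω) ≤ lam ^ (n:ℤ) := zpow_le_zpow_right₀ hlam1.le (hWub n ω)
    split
    · rw [abs_one, one_mul, abs_of_pos hz]; exact hb
    · rw [abs_zero, zero_mul]; positivity
  have hYmeas : ∀ n, Measurable (Y n) := by
    intro n
    exact meas_phiV hAmeas hSmeas n
      (fun v => (if ∀ m ≤ n, wsum v m < (k:ℤ) then (1:ℝ) else 0) * lam ^ (wsum v n))
      (hdepY n)
  have hYint : ∀ n, Integrable (Y n) μ := fun n =>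
    integrable_of_bounded' (hYmeas n) (hYb n)
  -- the key independence computation
  have hstepint : ∀ (t : ℝ), 1 < t → ∀ (n : ℕ) (φ : (ℕ → ℤ × ℤ) → ℝ) (Cφ : ℝ),
      (∀ v v' : ℕ → ℤ × ℤ, (∀ j < n, v j = v' j) → φ v = φ v') →
      (∀ ω, |φ (Vfun A S ω)| ≤ Cφ) →
      ∫ ω, φ (Vfun A S ω) * t ^ ((Vfun A S ω n).1 - (Vfun A S ω n).2) ∂μ =
        (∫ ω, φ (Vfun A S ω) ∂μ) * phi t := by
    intro t ht n φ Cφ hdep hb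
    have htpos : 0 < t := lt_trans one_pos ht
    have hbψ : ∀ ω, |t ^ ((Vfun A S ω n).1 - (Vfun A S ω n).2)| ≤ t := by
      intro ω
      have hz : 0 < t ^ ((Vfun A S ω n).1 - (Vfun A S ω n).2) := zpow_pos htpos _
      rw [abs_of_pos hz]
      have h := zpow_le_zpow_right₀ ht.le (hX1 n ω)
      simpa using h
    rw [mul_phiV hAmeas hSmeas hindep n φ (fun pq => t ^ (pq.1 - pq.2)) Cφ t hdep hb hbψ,
      exp_step hρ1.le hρ2pos.le hA01 hS01 hAmeas hSmeas hindep hAdens hSdens t htpos n]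
  -- the optional-stopping identity
  have hclaim : ∀ n, (∫ ω, Y n ω ∂μ) + lam ^ (k:ℤ) * (μ (G n)ᶜ).toReal = 1 := by
    intro n
    induction n with
    | zero =>
      have hG0 : G 0 = Set.univ := by
        apply Set.eq_univ_of_forall
        intro ω
        rw [hGmem]
        intro m hm
        have hm0 : m = 0 := Nat.le_zero.1 hm
        subst hm0
        rw [hW0 ω]
        exact_mod_cast hk
      have hY0 : Y 0 = fun _ => (1:ℝ) := by
        funext ω
        rw [hYdef]
        simp only
        rw [if_pos (by rw [hG0]; trivial : ω ∈ G 0), hW0 ω, zpow_zero, mul_one]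
      rw [hY0, hG0]
      simp
    | succ n ih =>
      have hptw : ∀ ω, Y (n+1) ω + lam ^ (k:ℤ) * ((G (n+1))ᶜ.indicator 1 ω) =
          Y n ω * lam ^ ((Vfun A S ω n).1 - (Vfun A S ω n).2) +
            lam ^ (k:ℤ) * ((G n)ᶜ.indicator 1 ω) := by
        intro ω
        by_cases h2 : ω ∈ G n
        · by_cases h1 : ω ∈ G (n+1)
          · rw [Set.indicator_of_notMem (by simpa using h1),
              Set.indicator_of_notMem (by simpa using h2)]
            rw [hYdef]
            simp only
            rw [if_pos h1, if_pos h2, hWstep n ω, zpow_add₀ (ne_of_gt hlampos)]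
            ring
          · rw [Set.indicator_of_mem (by simpa using h1 : ω ∈ (G (n+1))ᶜ),
              Set.indicator_of_notMem (by simpa using h2)]
            have h2' : ∀ m ≤ n, W m ω < (k:ℤ) := (hGmem n ω).1 h2
            have hWn1 : W (n+1) ω = (k:ℤ) := by
              have hex : ∃ m ≤ n + 1, (k:ℤ) ≤ W m ω := by
                by_contra hc
                push_neg at hc
                exact h1 ((hGmem (n+1) ω).2 hc)
              obtain ⟨m, hm, hkm⟩ := hex
              have hmn1 : m = n + 1 := by
                by_contra hmne
                have hmn : m ≤ n := by omega
                exact absurd hkm (not_le.2 (h2' m hmn))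
              subst hmn1
              have hlt : W n ω < (k:ℤ) := h2' n le_rfl
              have hXb := hX1 n ω
              rw [hWstep n ω]
              rw [hWstep n ω] at hkm
              omega
            rw [hYdef]
            simp only
            rw [if_neg h1, if_pos h2, zero_mul, one_mul, ← zpow_add₀ (ne_of_gt hlampos),
              ← hWstep n ω, hWn1, Pi.one_apply]
            ring
        · have h1 : ω ∉ G (n+1) := fun hmem => h2 (hGsub n hmem)
          rw [Set.indicator_of_mem (by simpa using h1 : ω ∈ (G (n+1))ᶜ),
            Set.indicator_of_mem (by simpa using h2 : ω ∈ (G n)ᶜ)]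
          rw [hYdef]
          simp only
          rw [if_neg h1, if_neg h2, Pi.one_apply]
          ring
      have hind1 : Integrable (fun ω => lam ^ (k:ℤ) * ((G (n+1))ᶜ.indicator 1 ω)) μ :=
        (((integrable_const (1:ℝ)).indicator (hGmeas (n+1)).compl)).const_mul _
      have hind0 : Integrable (fun ω => lam ^ (k:ℤ) * ((G n)ᶜ.indicator 1 ω)) μ :=
        (((integrable_const (1:ℝ)).indicator (hGmeas n).compl)).const_mul _
      have hprod : Integrable (fun ω => Y n ω * lam ^ ((Vfun A S ω n).1 - (Vfun A S ω n).2)) μ := by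
        apply integrable_of_bounded' (C := lam ^ (n:ℤ) * lam)
        · exact (hYmeas n).mul
            ((measurable_of_countable (fun pq : ℤ × ℤ => lam ^ (pq.1 - pq.2))).comp
              ((hAmeas _).prodMk (hSmeas _)))
        · intro ω
          rw [abs_mul]
          apply mul_le_mul (hYb n ω) _ (abs_nonneg _) (by positivity)
          have hz : 0 < lam ^ ((Vfun A S ω n).1 - (Vfun A S ω n).2) := zpow_pos hlampos _
          rw [abs_of_pos hz]
          have h := zpow_le_zpow_right₀ hlam1.le (hX1 n ω)
          simpa using h
      have heq : (∫ ω, Y (n+1) ω ∂μ) + lam ^ (k:ℤ) * (μ (G (n+1))ᶜ).toReal =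
          (∫ ω, Y n ω ∂μ) + lam ^ (k:ℤ) * (μ (G n)ᶜ).toReal := by
        have lhs : ∫ ω, (Y (n+1) ω + lam ^ (k:ℤ) * ((G (n+1))ᶜ.indicator 1 ω)) ∂μ =
            (∫ ω, Y (n+1) ω ∂μ) + lam ^ (k:ℤ) * (μ (G (n+1))ᶜ).toReal := by
          rw [integral_add (hYint (n+1)) hind1, integral_const_mul,
            integral_indicator_one (hGmeas (n+1)).compl, measureReal_def]
        have hmulstep : ∫ ω, Y n ω * lam ^ ((Vfun A S ω n).1 - (Vfun A S ω n).2) ∂μ =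
            (∫ ω, Y n ω ∂μ) * phi lam :=
          hstepint lam hlam1 n
            (fun v => (if ∀ m ≤ n, wsum v m < (k:ℤ) then (1:ℝ) else 0) * lam ^ (wsum v n))
            (lam ^ (n:ℤ)) (hdepY n) (hYb n)
        have rhs : ∫ ω, (Y n ω * lam ^ ((Vfun A S ω n).1 - (Vfun A S ω n).2) +
            lam ^ (k:ℤ) * ((G n)ᶜ.indicator 1 ω)) ∂μ =
            (∫ ω, Y n ω ∂μ) + lam ^ (k:ℤ) * (μ (G n)ᶜ).toReal := by
          rw [integral_add hprod hind0, integral_const_mul,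
            integral_indicator_one (hGmeas n).compl, measureReal_def, hmulstep, hphilam, mul_one]
        rw [← lhs, ← rhs]
        congr 1
        funext ω
        exact hptw ω
      rw [heq]
      exact ih
  -- pure exponential decay
  have hK : ∀ n, ∫ ω, lam' ^ (W n ω) ∂μ = (phi lam') ^ n := by
    intro n
    induction n with
    | zero =>
      have h : (fun ω => lam' ^ (W 0 ω)) = fun _ => (1:ℝ) := by
        funext ω; rw [hW0 ω, zpow_zero]
      rw [h]
      simp
    | succ n ih =>
      have hsp : (fun ω => lam' ^ (W (n+1) ω)) =
          fun ω => lam' ^ (W n ω) * lam' ^ ((Vfun A S ω n).1 - (Vfun A S ω n).2) := by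
        funext ω
        rw [hWstep n ω, zpow_add₀ (ne_of_gt hlam'pos)]
      have hdep' : ∀ v v' : ℕ → ℤ × ℤ, (∀ j < n, v j = v' j) →
          lam' ^ (wsum v n) = lam' ^ (wsum v' n) := by
        intro v v' hvv
        rw [hwdep n v v' hvv n le_rfl]
      have hb' : ∀ ω, |lam' ^ (W n ω)| ≤ lam' ^ (n:ℤ) := by
        intro ω
        rw [abs_of_pos (zpow_pos hlam'pos _)]
        exact zpow_le_zpow_right₀ hlam'1.le (hWub n ω)
      have hmulstep : ∫ ω, lam' ^ (W n ω) * lam' ^ ((Vfun A S ω n).1 - (Vfun A S ω n).2) ∂μ =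
          (∫ ω, lam' ^ (W n ω) ∂μ) * phi lam' :=
        hstepint lam' hlam'1 n (fun v => lam' ^ (wsum v n)) (lam' ^ (n:ℤ)) hdep' hb'
      rw [hsp, hmulstep, ih, pow_succ]
  have hIb : ∀ n, (∫ ω, Y n ω ∂μ) ≤ lam' ^ ((k:ℤ) - 1) * (phi lam') ^ n := by
    intro n
    have hpt : ∀ ω, Y n ω ≤ lam' ^ ((k:ℤ) - 1) * lam' ^ (W n ω) := by
      intro ω
      rw [hYdef]
      simp only
      split
      · rename_i h
        have h' : ∀ m ≤ n, W m ω < (k:ℤ) := (hGmem n ω).1 h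
        have hWlt : W n ω ≤ (k:ℤ) - 1 := by
          have := h' n le_rfl
          omega
        rw [one_mul, ← hlam'sq, mul_zpow]
        exact mul_le_mul_of_nonneg_right (zpow_le_zpow_right₀ hlam'1.le hWlt)
          (le_of_lt (zpow_pos hlam'pos _))
      · rw [zero_mul]
        positivity
    have hint2 : Integrable (fun ω => lam' ^ ((k:ℤ) - 1) * lam' ^ (W n ω)) μ := by
      apply Integrable.const_mul
      apply integrable_of_bounded' (C := lam' ^ (n:ℤ))
      · exact (measurable_of_countable (fun z : ℤ => lam' ^ z)).comp (hWmeas n)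
      · intro ω
        rw [abs_of_pos (zpow_pos hlam'pos _)]
        exact zpow_le_zpow_right₀ hlam'1.le (hWub n ω)
    calc (∫ ω, Y n ω ∂μ) ≤ ∫ ω, lam' ^ ((k:ℤ) - 1) * lam' ^ (W n ω) ∂μ :=
          integral_mono (hYint n) hint2 hpt
      _ = lam' ^ ((k:ℤ) - 1) * (phi lam') ^ n := by rw [integral_const_mul, hK n]
  have hI0 : ∀ n, 0 ≤ ∫ ω, Y n ω ∂μ := by
    intro n
    apply integral_nonneg
    intro ω
    simp only [Pi.zero_apply, hYdef]
    split
    · rw [one_mul]; exact le_of_lt (zpow_pos hlampos _)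
    · rw [zero_mul]
  -- limits
  have htendI : Filter.Tendsto (fun n => ∫ ω, Y n ω ∂μ) Filter.atTop (nhds 0) := by
    apply squeeze_zero hI0 hIb
    have h1 : Filter.Tendsto (fun n : ℕ => (phi lam') ^ n) Filter.atTop (nhds 0) :=
      tendsto_pow_atTop_nhds_zero_of_lt_one hphi'pos.le hphi'lt
    have h2 := h1.const_mul (lam' ^ ((k:ℤ) - 1))
    simpa using h2
  have htendJ : Filter.Tendsto (fun n => (μ (G n)ᶜ).toReal) Filter.atTop
      (nhds (lam ^ (-(k:ℤ)))) := by
    have hlk : (0:ℝ) < lam ^ (k:ℤ) := zpow_pos hlampos _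
    have hrepr : ∀ n, (μ (G n)ᶜ).toReal = (1 - ∫ ω, Y n ω ∂μ) * lam ^ (-(k:ℤ)) := by
      intro n
      have hc := hclaim n
      have h5 : (1 - ∫ ω, Y n ω ∂μ) = lam ^ (k:ℤ) * (μ (G n)ᶜ).toReal := by linarith
      rw [h5, zpow_neg, mul_comm (lam ^ (k:ℤ)), mul_assoc,
        mul_inv_cancel₀ (ne_of_gt hlk), mul_one]
    have h3 := (Filter.Tendsto.const_sub (1:ℝ) htendI).mul_const (lam ^ (-(k:ℤ)))
    simp only [sub_zero, one_mul] at h3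
    exact Filter.Tendsto.congr (fun n => (hrepr n).symm) h3
  have hmono : Monotone (fun n => (G n)ᶜ) := by
    apply monotone_nat_of_le_succ
    intro n
    exact Set.compl_subset_compl.2 (hGsub n)
  have hU : Filter.Tendsto (fun n => μ (G n)ᶜ) Filter.atTop (nhds (μ (⋃ n, (G n)ᶜ))) :=
    tendsto_measure_iUnion_atTop hmono
  have hU2 : Filter.Tendsto (fun n => μ (G n)ᶜ) Filter.atTop
      (nhds (ENNReal.ofReal (lam ^ (-(k:ℤ))))) := by
    have hofReal : ∀ n, μ (G n)ᶜ = ENNReal.ofReal ((μ (G n)ᶜ).toReal) := fun n =>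
      (ENNReal.ofReal_toReal (measure_ne_top μ _)).symm
    have h4 : Filter.Tendsto (fun n => ENNReal.ofReal ((μ (G n)ᶜ).toReal)) Filter.atTop
        (nhds (ENNReal.ofReal (lam ^ (-(k:ℤ))))) :=
      (ENNReal.continuous_ofReal.tendsto _).comp htendJ
    exact Filter.Tendsto.congr (fun n => (hofReal n).symm) h4
  have hfinal : μ (⋃ n, (G n)ᶜ) = ENNReal.ofReal (lam ^ (-(k:ℤ))) :=
    tendsto_nhds_unique hU hU2
  -- reindexing the sums
  have hre : ∀ (n : ℕ) (ω : Ω),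
      ∑ i ∈ Finset.Icc (1 - (n:ℤ)) 0, (A i ω - S i ω) = W n ω := by
    intro n ω
    have h : W n ω = ∑ j ∈ Finset.range n, (A (-(j:ℤ)) ω - S (-(j:ℤ)) ω) := rfl
    rw [h]
    refine Finset.sum_nbij' (fun i => (-i).toNat) (fun j => -(j:ℤ)) ?_ ?_ ?_ ?_ ?_
    · intro a ha
      rw [Finset.mem_Icc] at ha
      show (-a).toNat ∈ Finset.range n
      rw [Finset.mem_range]
      omega
    · intro a ha
      rw [Finset.mem_range] at ha
      show -(a:ℤ) ∈ Finset.Icc (1 - (n:ℤ)) 0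
      rw [Finset.mem_Icc]
      omega
    · intro a ha
      rw [Finset.mem_Icc] at ha
      show -(((-a).toNat : ℕ) : ℤ) = a
      omega
    · intro a ha
      rw [Finset.mem_range] at ha
      show (-(-(a:ℤ))).toNat = a
      omega
    · intro a ha
      rw [Finset.mem_Icc] at ha
      show A a ω - S a ω = A (-(((-a).toNat : ℕ) : ℤ)) ω - S (-(((-a).toNat : ℕ) : ℤ)) ω
      have hcast : (((-a).toNat : ℕ) : ℤ) = -a := by omega
      rw [hcast, neg_neg]
  -- identify the event
  have hset : {ω | (k : ℕ∞) ≤ Zq (fun i => A i ω) (fun i => S i ω) 0} = ⋃ n, (G n)ᶜ := by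
    ext ω
    simp only [Set.mem_setOf_eq, Set.mem_iUnion, Set.mem_compl_iff, hGmem]
    constructor
    · intro hle
      by_contra hcon
      push_neg at hcon
      have hall : ∀ r ∈ Set.Iic (0:ℤ),
          ((∑ i ∈ Finset.Icc r 0, (A i ω - S i ω)).toNat : ℕ∞) ≤ ((k - 1 : ℕ) : ℕ∞) := by
        intro r hr
        have hr0 : r ≤ 0 := hr
        obtain ⟨n, hrn⟩ : ∃ n : ℕ, 1 - (n:ℤ) = r := ⟨(1 - r).toNat, by omega⟩
        have hWn : W n ω < (k:ℤ) := hcon n n le_rfl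
        rw [← hrn, hre n ω]
        have h1 : ((k - 1 : ℕ) : ℤ) = (k:ℤ) - 1 := by omega
        have hle' : (W n ω).toNat ≤ k - 1 := Int.toNat_le.2 (by rw [h1]; omega)
        exact_mod_cast hle'
      have hZle : Zq (fun i => A i ω) (fun i => S i ω) 0 ≤ ((k - 1 : ℕ) : ℕ∞) := by
        simp only [Zq]
        exact iSup₂_le hall
      have hkk : (k : ℕ∞) ≤ ((k - 1 : ℕ) : ℕ∞) := le_trans hle hZle
      rw [Nat.cast_le] at hkk
      omega
    · rintro ⟨n, hn⟩
      push_neg at hn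
      obtain ⟨m, hmn, hkm⟩ := hn
      have hm1 : m ≠ 0 := by
        rintro rfl
        rw [hW0 ω] at hkm
        omega
      have hmem : (1 - (m:ℤ)) ∈ Set.Iic (0:ℤ) := by
        simp only [Set.mem_Iic]
        omega
      have hterm : (k : ℕ∞) ≤
          ((∑ i ∈ Finset.Icc (1 - (m:ℤ)) 0, (A i ω - S i ω)).toNat : ℕ∞) := by
        rw [hre m ω]
        have hWnn : 0 ≤ W m ω := le_trans (Int.natCast_nonneg k) hkm
        have hle' : k ≤ (W m ω).toNat := (Int.le_toNat hWnn).2 hkm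
        exact_mod_cast hle'
      refine le_trans hterm ?_
      simp only [Zq]
      exact le_iSup₂ (f := fun r (_ : r ∈ Set.Iic (0:ℤ)) =>
        ((∑ i ∈ Finset.Icc r 0, (A i ω - S i ω)).toNat : ℕ∞)) (1 - (m:ℤ)) hmem
  -- conclude
  rw [hset, hfinal]
  congr 1
  have hinv : lam⁻¹ = ρ1 * (1 - ρ2) / (ρ2 * (1 - ρ1)) := by
    rw [hlam, inv_div]
  rw [zpow_neg, zpow_natCast, ← inv_pow, hinv]
end

section
/- The departure operator D is monotone in its first argument: if α̃¹(j) ≤ α¹(j) for all j ∈ ℤ, then D(α̃¹,α²)(j) ≤ D(α¹,α²)(j) for all j ∈ ℤ. -/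
open scoped ENNReal
open Classical

lemma Zq_mono (a a' s : ℤ → ℤ) (hle : ∀ i, a i ≤ a' i) (j : ℤ) :
    Zq a s j ≤ Zq a' s j := by
  refine iSup₂_le fun r hr => ?_
  refine le_trans ?_ (le_iSup₂ (f := fun r (_ : r ∈ Set.Iic j) =>
    ((∑ i ∈ Finset.Icc r j, (a' i - s i)).toNat : ℕ∞)) r hr)
  exact_mod_cast Int.toNat_le_toNat (Finset.sum_le_sum fun i _ => by
    have := hle i; omega)

/-- The departure operator is monotone in its first argument. -/
theorem departure_monotone (a a' s : ℤ → ℤ)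
    (ha : ∀ i, a i = 0 ∨ a i = 1) (ha' : ∀ i, a' i = 0 ∨ a' i = 1)
    (hs : ∀ i, s i = 0 ∨ s i = 1)
    (hle : ∀ i, a i ≤ a' i) (j : ℤ) :
    Dq a s j ≤ Dq a' s j := by
  unfold Dq
  split_ifs with h1 h2 <;> try omega
  exact absurd ⟨h1.1, lt_of_lt_of_le h1.2 (add_le_add (Zq_mono a a' s hle _)
    (by exact_mod_cast Int.toNat_le_toNat (hle j)))⟩ h2
end

section
/- The multiclass partition equals the truncated iterated departures: with β¹₁ = α¹ and the recursions βᵏ₁ = D(βᵏ⁻¹₁, αᵏ), βᵏᵣ = D(βᵏ⁻¹ᵣ, αᵏ - βᵏ₁ - … - βᵏᵣ₋₁) for 1 < r < k, βᵏₖ = αᵏ - D(αᵏ⁻¹, αᵏ), one has β ᵏ₁ + βᵏ₂ + … + βᵏᵣ = D⁽ᵏ⁻ʳ⁺¹⁾(αʳ, αʳ⁺¹, …, αᵏ) for all 1 ≤ r ≤ k ≤ n. -/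
open scoped ENNReal
open Classical

lemma le_bsup (g : ℤ → ℤ) {r j : ℤ} (h : r ≤ j) :
    ((g r).toNat : ℕ∞) ≤ ⨆ r ∈ Set.Iic j, ((g r).toNat : ℕ∞) :=
  le_iSup₂ (f := fun r (_ : r ∈ Set.Iic j) => ((g r).toNat : ℕ∞)) r h

lemma bsup_le {g : ℤ → ℤ} {j : ℤ} {m : ℕ∞} (h : ∀ r ≤ j, ((g r).toNat : ℕ∞) ≤ m) :
    (⨆ r ∈ Set.Iic j, ((g r).toNat : ℕ∞)) ≤ m := iSup₂_le h

lemma bsup_attain {g : ℤ → ℤ} {j : ℤ} {m : ℕ}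
    (h : (⨆ r ∈ Set.Iic j, ((g r).toNat : ℕ∞)) = m) (hm : 0 < m) :
    ∃ r ≤ j, g r = m := by
  by_contra hc
  push_neg at hc
  have hb : ∀ r ≤ j, ((g r).toNat : ℕ∞) ≤ ((m - 1 : ℕ) : ℕ∞) := by
    intro r hr
    have h1 : ((g r).toNat : ℕ∞) ≤ (m : ℕ∞) := h ▸ le_bsup g hr
    have h2 : (g r).toNat ≤ m := by exact_mod_cast h1
    have h3 : g r ≠ m := hc r hr
    have : (g r).toNat ≤ m - 1 := by omega
    exact_mod_cast Nat.cast_le.mpr this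
  have hle := bsup_le hb
  rw [h] at hle
  have : m ≤ m - 1 := by exact_mod_cast hle
  omega

lemma bsup_top {g : ℤ → ℤ} {j : ℤ}
    (h : (⨆ r ∈ Set.Iic j, ((g r).toNat : ℕ∞)) = ⊤) (N : ℕ) :
    ∃ r ≤ j, (N : ℤ) ≤ g r := by
  by_contra hc
  push_neg at hc
  have hb : ∀ r ≤ j, ((g r).toNat : ℕ∞) ≤ ((N : ℕ) : ℕ∞) := by
    intro r hr
    have := hc r hr
    have : (g r).toNat ≤ N := by omega
    exact_mod_cast Nat.cast_le.mpr this
  have hle := bsup_le hb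
  rw [h] at hle
  simp at hle

lemma Dq01 (a s : ℤ → ℤ) (i : ℤ) : Dq a s i = 0 ∨ Dq a s i = 1 := by
  unfold Dq; split <;> simp

lemma Dq_eq_one_imp {a s : ℤ → ℤ} {i : ℤ} (h : Dq a s i = 1) : s i = 1 := by
  unfold Dq at h
  split at h
  · exact (by assumption : _ ∧ _).1
  · exact absurd h (by norm_num)

lemma ENat.eq_top_of_forall_le {x : ℕ∞} (h : ∀ N : ℕ, (N : ℕ∞) ≤ x) : x = ⊤ := by
  rcases eq_or_ne x ⊤ with h' | h'
  · exact h'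
  · exfalso
    have hx := h (x.toNat + 1)
    rw [← ENat.coe_toNat h'] at hx
    exact_mod_cast Nat.not_succ_le_self _ (by exact_mod_cast hx)

lemma Zq_step {a s : ℤ → ℤ} (ha : ∀ i, a i = 0 ∨ a i = 1) (hs : ∀ i, s i = 0 ∨ s i = 1)
    (j : ℤ) :
    Zq a s j + ((Dq a s j).toNat : ℕ∞) = Zq a s (j - 1) + ((a j).toNat : ℕ∞) := by
  classical
  set g : ℤ → ℤ := fun r => ∑ i ∈ Finset.Icc r (j - 1), (a i - s i) with hg
  have hzg : Zq a s (j - 1) = ⨆ r ∈ Set.Iic (j - 1), ((g r).toNat : ℕ∞) := rfl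
  set z : ℕ∞ := Zq a s (j - 1) with hz
  have hIic : Set.Iic j = insert j (Set.Iic (j - 1)) := by
    ext x; simp; omega
  have hsumsplit : ∀ r : ℤ, r ≤ j - 1 →
      (∑ i ∈ Finset.Icc r j, (a i - s i)) = g r + (a j - s j) := by
    intro r hr
    have hins : Finset.Icc r j = insert j (Finset.Icc r (j - 1)) := by
      ext x; simp; omega
    rw [hins, Finset.sum_insert (by simp), hg]
    ring
  have hdecomp : Zq a s j =
      ((a j - s j).toNat : ℕ∞) ⊔
        ⨆ r ∈ Set.Iic (j - 1), (((g r) + (a j - s j)).toNat : ℕ∞) := by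
    unfold Zq
    rw [hIic, iSup_insert]
    congr 1
    · rw [Finset.Icc_self, Finset.sum_singleton]
    · refine iSup_congr fun r => ?_
      refine iSup_congr_Prop Iff.rfl fun hr => ?_
      rw [hsumsplit r hr]
  have hzero_sup : ∀ x : ℕ∞, (0 : ℕ∞) ⊔ x = x := fun x => sup_eq_right.mpr zero_le
  rcases ha j with ha' | ha' <;> rcases hs j with hs' | hs'
  · -- a j = 0, s j = 0
    have hD : Dq a s j = 0 := by
      unfold Dq; rw [if_neg]; rintro ⟨h1, -⟩; rw [hs'] at h1; exact absurd h1 (by norm_num)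
    have hZ : Zq a s j = z := by
      rw [hdecomp, ha', hs']
      norm_num
      simpa using hzg.symm
    rw [hZ, hD, ha']
  · -- a j = 0, s j = 1 : δ = -1
    have hZ : Zq a s j = ⨆ r ∈ Set.Iic (j - 1), (((g r) - 1).toNat : ℕ∞) := by
      rw [hdecomp, ha', hs']
      have e2 : ∀ x : ℤ, x + (0 - 1) = x - 1 := fun x => by ring
      simp only [e2]
      rw [show ((0:ℤ) - 1).toNat = 0 from rfl, Nat.cast_zero]
      exact hzero_sup _
    rcases eq_or_ne z 0 with hz0 | hz0
    · have hD : Dq a s j = 0 := by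
        unfold Dq; rw [if_neg]
        rintro ⟨-, h2⟩
        rw [← hz, hz0, ha'] at h2
        simp at h2
      have hZ0 : Zq a s j = 0 := by
        rw [hZ]
        refine le_antisymm (bsup_le fun r hr => ?_) zero_le
        have h1 : ((g r).toNat : ℕ∞) ≤ z := hzg ▸ le_bsup g hr
        rw [hz0] at h1
        have : (g r).toNat = 0 := by exact_mod_cast le_antisymm h1 zero_le
        have : (g r - 1).toNat = 0 := by omega
        simp [this]
      rw [hZ0, hD, ha', hz0]
    · have hD : Dq a s j = 1 := by
        unfold Dq; rw [if_pos]
        refine ⟨hs', ?_⟩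
        rw [← hz, ha']
        simp only [Int.toNat_zero, Nat.cast_zero, add_zero]
        exact pos_iff_ne_zero.mpr hz0
      rw [hD, ha']
      norm_num
      -- goal : Zq a s j + 1 = z
      rcases eq_or_ne z ⊤ with hzt | hzt
      · have hS : Zq a s j = ⊤ := by
          rw [hZ]
          refine ENat.eq_top_of_forall_le fun N => ?_
          obtain ⟨r, hr, hge⟩ := bsup_top (hzg ▸ hzt : _) (N + 1)
          have h1 : (N : ℤ) ≤ g r - 1 := by push_cast at hge ⊢; omega
          have h2 : N ≤ (g r - 1).toNat := by omega
          exact le_trans (by exact_mod_cast Nat.cast_le.mpr h2) (le_bsup _ hr)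
        rw [hS, hzt]
        rfl
      · obtain ⟨m, hm⟩ : ∃ m : ℕ, z = m := ⟨z.toNat, (ENat.coe_toNat hzt).symm⟩
        have hm0 : 0 < m := by
          rcases Nat.eq_zero_or_pos m with h | h
          · exact absurd (by rw [hm, h]; rfl) hz0
          · exact h
        have hSle : Zq a s j ≤ ((m - 1 : ℕ) : ℕ∞) := by
          rw [hZ]
          refine bsup_le fun r hr => ?_
          have h1 : ((g r).toNat : ℕ∞) ≤ z := hzg ▸ le_bsup g hr
          rw [hm] at h1
          have h2 : (g r).toNat ≤ m := by exact_mod_cast h1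
          have : (g r - 1).toNat ≤ m - 1 := by omega
          exact_mod_cast Nat.cast_le.mpr this
        have hSge : ((m - 1 : ℕ) : ℕ∞) ≤ Zq a s j := by
          obtain ⟨r, hr, hgr⟩ := bsup_attain (hzg ▸ hm : _) hm0
          have : (g r - 1).toNat = m - 1 := by omega
          rw [hZ, ← this]
          exact le_bsup _ hr
        rw [le_antisymm hSle hSge, hm]
        have : m - 1 + 1 = m := by omega
        exact_mod_cast congrArg (Nat.cast : ℕ → ℕ∞) this
  · -- a j = 1, s j = 0 : δ = 1
    have hD : Dq a s j = 0 := by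
      unfold Dq; rw [if_neg]; rintro ⟨h1, -⟩; rw [hs'] at h1; exact absurd h1 (by norm_num)
    have hZ : Zq a s j = 1 ⊔ ⨆ r ∈ Set.Iic (j - 1), (((g r) + 1).toNat : ℕ∞) := by
      rw [hdecomp, ha', hs']
      norm_num
    have hgoal : Zq a s j = z + 1 := by
      rw [hZ]
      refine le_antisymm (sup_le (le_add_self) (bsup_le fun r hr => ?_)) ?_
      · have h1 : ((g r).toNat : ℕ∞) ≤ z := hzg ▸ le_bsup g hr
        have h2 : (g r + 1).toNat ≤ (g r).toNat + 1 := by omega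
        calc ((g r + 1).toNat : ℕ∞) ≤ ((g r).toNat : ℕ∞) + 1 := by exact_mod_cast Nat.cast_le.mpr h2
          _ ≤ z + 1 := add_le_add_left h1 1
      · rcases eq_or_ne z ⊤ with hzt | hzt
        · have : (⨆ r ∈ Set.Iic (j - 1), (((g r) + 1).toNat : ℕ∞)) = ⊤ := by
            refine ENat.eq_top_of_forall_le fun N => ?_
            obtain ⟨r, hr, hge⟩ := bsup_top (hzg ▸ hzt : _) N
            have h2 : N ≤ (g r + 1).toNat := by omega
            exact le_trans (by exact_mod_cast Nat.cast_le.mpr h2) (le_bsup _ hr)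
          rw [this]
          simp
        · obtain ⟨m, hm⟩ : ∃ m : ℕ, z = m := ⟨z.toNat, (ENat.coe_toNat hzt).symm⟩
          rcases Nat.eq_zero_or_pos m with hm0 | hm0
          · rw [hm, hm0]
            simpa using le_sup_left
          · obtain ⟨r, hr, hgr⟩ := bsup_attain (hzg ▸ hm : _) hm0
            have h2 : (g r + 1).toNat = m + 1 := by omega
            rw [hm]
            refine le_trans ?_ (le_sup_right)
            refine le_trans ?_ (le_bsup (fun r => g r + 1) hr)
            rw [h2]
            push_cast
            rfl
    rw [hgoal, hD, ha']
    norm_num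
  · -- a j = 1, s j = 1 : δ = 0
    have hD : Dq a s j = 1 := by
      unfold Dq; rw [if_pos]
      refine ⟨hs', ?_⟩
      rw [ha']
      simp only [Int.toNat_one, Nat.cast_one]
      exact lt_of_lt_of_le zero_lt_one le_add_self
    have hZ : Zq a s j = z := by
      rw [hdecomp, ha', hs']
      norm_num
      simpa using hzg.symm
    rw [hZ, hD, ha']

lemma Zq_flow {a s : ℤ → ℤ} (ha : ∀ i, a i = 0 ∨ a i = 1) (hs : ∀ i, s i = 0 ∨ s i = 1)
    (r : ℤ) : ∀ j, r - 1 ≤ j →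
    Zq a s j + ((∑ i ∈ Finset.Icc r j, (Dq a s i).toNat : ℕ) : ℕ∞) =
      Zq a s (r - 1) + ((∑ i ∈ Finset.Icc r j, (a i).toNat : ℕ) : ℕ∞) := by
  refine Int.le_induction ?_ ?_
  · rw [Finset.Icc_eq_empty (by omega : ¬ r ≤ r - 1)]; simp
  · intro j hj ih
    have hins : Finset.Icc r (j + 1) = insert (j + 1) (Finset.Icc r j) := by
      ext x; simp; omega
    have hnot : (j + 1) ∉ Finset.Icc r j := by simp
    have hstep := Zq_step ha hs (j + 1)
    rw [show j + 1 - 1 = j from by ring] at hstep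
    rw [hins, Finset.sum_insert hnot, Finset.sum_insert hnot, Nat.cast_add, Nat.cast_add]
    calc Zq a s (j + 1) + (((Dq a s (j+1)).toNat : ℕ∞) + (∑ i ∈ Finset.Icc r j, (Dq a s i).toNat : ℕ))
        = (Zq a s (j + 1) + ((Dq a s (j+1)).toNat : ℕ∞)) + ((∑ i ∈ Finset.Icc r j, (Dq a s i).toNat : ℕ) : ℕ∞) := by ring
      _ = (Zq a s j + ((∑ i ∈ Finset.Icc r j, (Dq a s i).toNat : ℕ) : ℕ∞)) + ((a (j+1)).toNat : ℕ∞) := by rw [hstep]; ring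
      _ = (Zq a s (r - 1) + ((∑ i ∈ Finset.Icc r j, (a i).toNat : ℕ) : ℕ∞)) + ((a (j+1)).toNat : ℕ∞) := by rw [ih]
      _ = Zq a s (r - 1) + (((a (j+1)).toNat : ℕ∞) + ((∑ i ∈ Finset.Icc r j, (a i).toNat : ℕ) : ℕ∞)) := by ring

lemma Zq_flowZ {a s : ℤ → ℤ} (ha : ∀ i, a i = 0 ∨ a i = 1) (hs : ∀ i, s i = 0 ∨ s i = 1)
    (hf : ∀ j, Zq a s j ≠ ⊤) {r j : ℤ} (hj : r - 1 ≤ j) :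
    ∑ i ∈ Finset.Icc r j, (a i - Dq a s i) =
      ((Zq a s j).toNat : ℤ) - ((Zq a s (r - 1)).toNat : ℤ) := by
  have hflow := Zq_flow ha hs r j hj
  rw [← ENat.coe_toNat (hf j), ← ENat.coe_toNat (hf (r - 1))] at hflow
  have hnat : (Zq a s j).toNat + (∑ i ∈ Finset.Icc r j, (Dq a s i).toNat) =
      (Zq a s (r - 1)).toNat + (∑ i ∈ Finset.Icc r j, (a i).toNat) := by
    exact_mod_cast hflow
  have h1 : ∑ i ∈ Finset.Icc r j, (a i - Dq a s i) =
      ((∑ i ∈ Finset.Icc r j, (a i).toNat : ℕ) : ℤ) - ((∑ i ∈ Finset.Icc r j, (Dq a s i).toNat : ℕ) : ℤ) := by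
    push_cast
    rw [← Finset.sum_sub_distrib]
    refine Finset.sum_congr rfl fun i _ => ?_
    rcases ha i with h | h <;> rcases Dq01 a s i with h' | h' <;> rw [h, h'] <;> rfl
  rw [h1]
  omega

lemma Zq_attain {a s : ℤ → ℤ} {j : ℤ} (hf : Zq a s j ≠ ⊤) :
    ∃ r ≤ j + 1, (∑ i ∈ Finset.Icc r j, (a i - s i)) = ((Zq a s j).toNat : ℤ) := by
  have hZdef : Zq a s j = ⨆ r ∈ Set.Iic j, (((∑ i ∈ Finset.Icc r j, (a i - s i))).toNat : ℕ∞) := rfl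
  rcases Nat.eq_zero_or_pos (Zq a s j).toNat with h0 | hpos
  · refine ⟨j + 1, le_refl _, ?_⟩
    rw [Finset.Icc_eq_empty (by omega : ¬ j + 1 ≤ j), h0]
    simp
  · have hcoe : (⨆ r ∈ Set.Iic j, (((∑ i ∈ Finset.Icc r j, (a i - s i))).toNat : ℕ∞))
        = ((Zq a s j).toNat : ℕ∞) := by rw [← hZdef, ENat.coe_toNat hf]
    obtain ⟨r, hr, hgr⟩ := bsup_attain hcoe hpos
    exact ⟨r, by omega, hgr⟩

lemma Zq_add {a b s : ℤ → ℤ} (ha : ∀ i, a i = 0 ∨ a i = 1) (hb : ∀ i, b i = 0 ∨ b i = 1)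
    (hs : ∀ i, s i = 0 ∨ s i = 1)
    (hfa : ∀ j, Zq a s j ≠ ⊤) (hfb : ∀ j, Zq b (fun i => s i - Dq a s i) j ≠ ⊤) (j : ℤ) :
    Zq (fun i => a i + b i) s j = Zq a s j + Zq b (fun i => s i - Dq a s i) j := by
  classical
  set za : ℕ := (Zq a s j).toNat with hza
  set zb : ℕ := (Zq b (fun i => s i - Dq a s i) j).toNat with hzb
  have hCdef : Zq (fun i => a i + b i) s j
      = ⨆ r ∈ Set.Iic j, (((∑ i ∈ Finset.Icc r j, (a i + b i - s i))).toNat : ℕ∞) := rfl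
  have hsplit : ∀ r : ℤ, (∑ i ∈ Finset.Icc r j, (a i + b i - s i)) =
      (∑ i ∈ Finset.Icc r j, (a i - Dq a s i)) +
        (∑ i ∈ Finset.Icc r j, (b i - (s i - Dq a s i))) := by
    intro r
    rw [← Finset.sum_add_distrib]
    exact Finset.sum_congr rfl fun i _ => by ring
  have hble : ∀ r ≤ j, (((∑ i ∈ Finset.Icc r j, (b i - (s i - Dq a s i))).toNat : ℕ∞))
      ≤ (zb : ℕ∞) := by
    intro r hr
    rw [hzb, ENat.coe_toNat (hfb j)]
    exact le_bsup _ hr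
  -- upper bound
  have hup : Zq (fun i => a i + b i) s j ≤ ((za + zb : ℕ) : ℕ∞) := by
    rw [hCdef]
    refine bsup_le fun r hr => ?_
    have hflow := Zq_flowZ ha hs hfa (r := r) (j := j) (by omega)
    have hZar : ((Zq a s (r - 1)).toNat : ℤ) ≥ 0 := by positivity
    have hTb : ((∑ i ∈ Finset.Icc r j, (b i - (s i - Dq a s i))).toNat : ℕ∞) ≤ (zb : ℕ∞) :=
      hble r hr
    have hTbn : (∑ i ∈ Finset.Icc r j, (b i - (s i - Dq a s i))).toNat ≤ zb := by
      exact_mod_cast hTb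
    have hkey : (∑ i ∈ Finset.Icc r j, (a i + b i - s i)).toNat ≤ za + zb := by
      have h1 := hsplit r
      omega
    exact_mod_cast Nat.cast_le.mpr hkey
  -- lower bound
  have hlow : ((za + zb : ℕ) : ℕ∞) ≤ Zq (fun i => a i + b i) s j := by
    obtain ⟨r₂, hr₂, hTb2⟩ := Zq_attain (hfb j)
    obtain ⟨r₁, hr₁, hTa1⟩ := Zq_attain (hfa (r₂ - 1))
    have hr₁₂ : r₁ ≤ r₂ := by omega
    by_cases hr1j : r₁ ≤ j
    · have hdisj : Disjoint (Finset.Icc r₁ (r₂ - 1)) (Finset.Icc r₂ j) := by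
        rw [Finset.disjoint_left]
        intro x hx hx'
        simp only [Finset.mem_Icc] at hx hx'
        omega
      have hunion : ∀ f : ℤ → ℤ, (∑ i ∈ Finset.Icc r₁ j, f i) =
          (∑ i ∈ Finset.Icc r₁ (r₂ - 1), f i) + (∑ i ∈ Finset.Icc r₂ j, f i) := by
        intro f
        rw [← Finset.sum_union hdisj]
        apply Finset.sum_congr _ (fun _ _ => rfl)
        ext x
        simp only [Finset.mem_Icc, Finset.mem_union]
        omega
      have hbnn : (0 : ℤ) ≤ ∑ i ∈ Finset.Icc r₁ (r₂ - 1), b i :=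
        Finset.sum_nonneg fun i _ => by rcases hb i with h | h <;> omega
      have hflow2 := Zq_flowZ ha hs hfa (r := r₂) (j := j) (by omega)
      have hsplitA : (∑ i ∈ Finset.Icc r₁ (r₂ - 1), (a i - s i)) + (∑ i ∈ Finset.Icc r₁ (r₂ - 1), b i)
          = ∑ i ∈ Finset.Icc r₁ (r₂ - 1), (a i + b i - s i) := by
        rw [← Finset.sum_add_distrib]
        exact Finset.sum_congr rfl fun i _ => by ring
      have hX : (za + zb : ℤ) ≤ ∑ i ∈ Finset.Icc r₁ j, (a i + b i - s i) := by
        have h1 := hunion (fun i => a i + b i - s i)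
        have h2 := hsplit r₂
        omega
      have hXt : za + zb ≤ (∑ i ∈ Finset.Icc r₁ j, (a i + b i - s i)).toNat := by omega
      calc ((za + zb : ℕ) : ℕ∞) ≤ (((∑ i ∈ Finset.Icc r₁ j, (a i + b i - s i)).toNat : ℕ) : ℕ∞) := by
            exact_mod_cast Nat.cast_le.mpr hXt
        _ ≤ Zq (fun i => a i + b i) s j := by rw [hCdef]; exact le_bsup _ hr1j
    · have hr₁e : r₁ = j + 1 := by omega
      have hr₂e : r₂ = j + 1 := by omega
      have hzb0 : (zb : ℤ) = 0 := by
        rw [← hTb2, hr₂e, Finset.Icc_eq_empty (by omega : ¬ j + 1 ≤ j), Finset.sum_empty]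
      have hza0 : (za : ℤ) = 0 := by
        have hempty : Finset.Icc r₁ (r₂ - 1) = ∅ := Finset.Icc_eq_empty (by omega)
        rw [hempty, Finset.sum_empty] at hTa1
        have hj' : r₂ - 1 = j := by omega
        rw [hj'] at hTa1
        simp only [hza]
        omega
      have : za + zb = 0 := by omega
      rw [this]
      simp
  have hfin := le_antisymm hup hlow
  rw [hfin, ← ENat.coe_toNat (hfa j), ← ENat.coe_toNat (hfb j), ← Nat.cast_add]

lemma Dq_add {a b s : ℤ → ℤ} (ha : ∀ i, a i = 0 ∨ a i = 1) (hb : ∀ i, b i = 0 ∨ b i = 1)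
    (hs : ∀ i, s i = 0 ∨ s i = 1)
    (hfa : ∀ j, Zq a s j ≠ ⊤) (hfb : ∀ j, Zq b (fun i => s i - Dq a s i) j ≠ ⊤) (j : ℤ) :
    Dq (fun i => a i + b i) s j = Dq a s j + Dq b (fun i => s i - Dq a s i) j := by
  classical
  have hZ := Zq_add ha hb hs hfa hfb (j - 1)
  have hDc : Dq (fun i => a i + b i) s j =
      if s j = 1 ∧ 0 < Zq (fun i => a i + b i) s (j - 1) + (((a j + b j)).toNat : ℕ∞)
      then 1 else 0 := rfl
  have hDb : Dq b (fun i => s i - Dq a s i) j =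
      if s j - Dq a s j = 1 ∧
          0 < Zq b (fun i => s i - Dq a s i) (j - 1) + (((b j)).toNat : ℕ∞)
      then 1 else 0 := rfl
  by_cases hc : s j = 1 ∧ 0 < Zq a s (j - 1) + ((a j).toNat : ℕ∞)
  · have hda : Dq a s j = 1 := by unfold Dq; rw [if_pos hc]
    have hdb : Dq b (fun i => s i - Dq a s i) j = 0 := by
      rw [hDb, if_neg]
      rintro ⟨h1, -⟩
      rw [hda, hc.1] at h1
      norm_num at h1
    have hdc : Dq (fun i => a i + b i) s j = 1 := by
      rw [hDc, if_pos]
      refine ⟨hc.1, ?_⟩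
      have hle : ((a j).toNat : ℕ∞) ≤ (((a j + b j)).toNat : ℕ∞) := by
        have : (a j).toNat ≤ (a j + b j).toNat := by rcases hb j with h | h <;> omega
        exact_mod_cast Nat.cast_le.mpr this
      calc (0 : ℕ∞) < Zq a s (j - 1) + ((a j).toNat : ℕ∞) := hc.2
        _ ≤ Zq (fun i => a i + b i) s (j - 1) + (((a j + b j)).toNat : ℕ∞) := by
            rw [hZ]; exact add_le_add le_self_add hle
    rw [hda, hdb, hdc]; norm_num
  · have hda : Dq a s j = 0 := by unfold Dq; rw [if_neg hc]
    by_cases hs1 : s j = 1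
    · have hnot : ¬ 0 < Zq a s (j - 1) + ((a j).toNat : ℕ∞) := fun h => hc ⟨hs1, h⟩
      have h0 : Zq a s (j - 1) + ((a j).toNat : ℕ∞) = 0 :=
        le_antisymm (not_lt.mp hnot) zero_le
      have hza0 : Zq a s (j - 1) = 0 := (add_eq_zero.mp h0).1
      have haj0 : a j = 0 := by
        have := (add_eq_zero.mp h0).2
        rcases ha j with h | h
        · exact h
        · rw [h] at this; norm_num at this
      have habj : (a j + b j).toNat = (b j).toNat := by rw [haj0]; simp
      have hZc : Zq (fun i => a i + b i) s (j - 1)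
          = Zq b (fun i => s i - Dq a s i) (j - 1) := by rw [hZ, hza0, zero_add]
      have hcond : (s j - Dq a s j = 1 ∧
            0 < Zq b (fun i => s i - Dq a s i) (j - 1) + (((b j)).toNat : ℕ∞)) ↔
          (s j = 1 ∧ 0 < Zq (fun i => a i + b i) s (j - 1) + (((a j + b j)).toNat : ℕ∞)) := by
        rw [hda, hs1, hZc, habj]
        norm_num
      rw [hDc, hDb]
      by_cases hcb : s j - Dq a s j = 1 ∧
          0 < Zq b (fun i => s i - Dq a s i) (j - 1) + (((b j)).toNat : ℕ∞)
      · rw [if_pos hcb, if_pos (hcond.mp hcb), hda]; norm_num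
      · rw [if_neg hcb, if_neg (fun h => hcb (hcond.mpr h)), hda]; norm_num
    · have hsj0 : s j = 0 := by rcases hs j with h | h; exact h; exact absurd h hs1
      have hdb : Dq b (fun i => s i - Dq a s i) j = 0 := by
        rw [hDb, if_neg]
        rintro ⟨h1, -⟩
        rw [hda, hsj0] at h1
        norm_num at h1
      have hdc : Dq (fun i => a i + b i) s j = 0 := by
        rw [hDc, if_neg]
        rintro ⟨h1, -⟩
        exact hs1 h1
      rw [hda, hdb, hdc]; norm_num

lemma Dfrom_zero (α : ℕ → ℤ → ℤ) (r : ℕ) : Dfrom α r 0 = α r := rfl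

lemma Dfrom_succ (α : ℕ → ℤ → ℤ) (r m : ℕ) :
    Dfrom α r (m + 1) = Dq (Dfrom α r m) (α (r + m + 1)) := rfl

lemma Dfrom01 {n : ℕ} {α : ℕ → ℤ → ℤ}
    (h01 : ∀ k, 1 ≤ k → k ≤ n → ∀ i, α k i = 0 ∨ α k i = 1)
    {ρ m : ℕ} (hρ : 1 ≤ ρ) (hm : ρ + m ≤ n) (i : ℤ) :
    Dfrom α ρ m i = 0 ∨ Dfrom α ρ m i = 1 := by
  cases m with
  | zero => exact h01 ρ hρ (by omega) i
  | succ m => exact Dq01 _ _ i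

/-- Multiclass partition equals truncated iterated departures:
with `β¹₁ = α¹` and the recursions `βᵏ₁ = D(βᵏ⁻¹₁, αᵏ)`,
`βᵏᵣ = D(βᵏ⁻¹ᵣ, αᵏ − βᵏ₁ − … − βᵏᵣ₋₁)` for `1 < r < k`, and `βᵏₖ = αᵏ − D(αᵏ⁻¹, αᵏ)`,
one has `βᵏ₁ + … + βᵏᵣ = D⁽ᵏ⁻ʳ⁺¹⁾(αʳ, …, αᵏ)` for all `1 ≤ r ≤ k ≤ n`.
(Here lines are 1-indexed and `D⁽ᵏ⁻ʳ⁺¹⁾(αʳ,…,αᵏ) = Dfrom α r (k - r)`.) -/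
theorem multiclass_partition_eq_truncated_departures (n : ℕ) (hn : 1 ≤ n)
    (α : ℕ → ℤ → ℤ) (β : ℕ → ℕ → ℤ → ℤ)
    (h01 : ∀ k, 1 ≤ k → k ≤ n → ∀ i, α k i = 0 ∨ α k i = 1)
    (h11 : β 1 1 = α 1)
    (hfirst : ∀ k, 2 ≤ k → k ≤ n → β k 1 = Dq (β (k - 1) 1) (α k))
    (hmid : ∀ k r, 1 < r → r < k → k ≤ n →
      β k r = Dq (β (k - 1) r) (fun i => α k i - ∑ s ∈ Finset.Icc 1 (r - 1), β k s i))
    (hlast : ∀ k, 2 ≤ k → k ≤ n →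
      β k k = fun i => α k i - Dq (α (k - 1)) (α k) i)
    (hfinβ : ∀ k r, 1 ≤ r → r < k → k ≤ n → ∀ j,
      Zq (β (k - 1) r) (fun i => α k i - ∑ s ∈ Finset.Icc 1 (r - 1), β k s i) j ≠ ⊤)
    (hfinD : ∀ r t, 1 ≤ r → r + t + 1 ≤ n → ∀ j,
      Zq (Dfrom α r t) (α (r + t + 1)) j ≠ ⊤) :
    ∀ r k, 1 ≤ r → r ≤ k → k ≤ n → ∀ i,
      (∑ s ∈ Finset.Icc 1 r, β k s i) = Dfrom α r (k - r) i := by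
  have key : ∀ k, 1 ≤ k → k ≤ n → ∀ r, 1 ≤ r → r ≤ k →
      (fun i => ∑ s ∈ Finset.Icc 1 r, β k s i) = Dfrom α r (k - r) := by
    intro k
    induction k with
    | zero => intro h; exact absurd h (by omega)
    | succ k ihk =>
      intro hk1 hkn r
      induction r with
      | zero => intro h1 _; exact absurd h1 (by omega)
      | succ r ihr =>
        intro _ hrk1
        by_cases hr0 : r = 0
        · subst hr0
          rw [show k + 1 - 1 = k from rfl]
          by_cases hk0 : k = 0
          · subst hk0
            funext i
            rw [Finset.Icc_self, Finset.sum_singleton]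
            show β 1 1 i = Dfrom α 1 0 i
            rw [h11, Dfrom_zero]
          · have hk1' : 1 ≤ k := by omega
            have hbk1 : β k 1 = Dfrom α 1 (k - 1) := by
              have h2 := ihk hk1' (by omega) 1 le_rfl hk1'
              funext i
              have h3 : (∑ s ∈ Finset.Icc 1 1, β k s i) = Dfrom α 1 (k - 1) i :=
                congrFun h2 i
              rw [Finset.Icc_self, Finset.sum_singleton] at h3
              exact h3
            have hfirst' := hfirst (k + 1) (by omega) hkn
            rw [show k + 1 - 1 = k from rfl] at hfirst'
            have hL : (fun i => ∑ s ∈ Finset.Icc 1 1, β (k + 1) s i) = β (k + 1) 1 :=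
              funext fun i => by rw [Finset.Icc_self, Finset.sum_singleton]
            have hR : Dfrom α 1 k = Dq (Dfrom α 1 (k - 1)) (α (k + 1)) := by
              conv_lhs => rw [show k = (k - 1) + 1 from by omega]
              rw [Dfrom_succ, show 1 + (k - 1) + 1 = k + 1 from by omega]
            rw [hL, hfirst', hbk1, hR]
        · have hr1 : 1 ≤ r := by omega
          by_cases hrk : r + 1 ≤ k
          · -- middle case
            have hk2 : 2 ≤ k := by omega
            have hA : (fun i => ∑ s ∈ Finset.Icc 1 r, β k s i) = Dfrom α r (k - r) :=
              ihk (by omega) (by omega) r hr1 (by omega)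
            have hC : (fun i => ∑ s ∈ Finset.Icc 1 (r + 1), β k s i)
                = Dfrom α (r + 1) (k - (r + 1)) :=
              ihk (by omega) (by omega) (r + 1) (by omega) hrk
            set A := Dfrom α r (k - r) with hAdef
            set B := β k (r + 1) with hBdef
            set C := Dfrom α (r + 1) (k - (r + 1)) with hCdef
            have hsumC : (fun i => A i + B i) = C := by
              funext i
              have h1 := Finset.sum_Icc_succ_top (by omega : 1 ≤ r + 1) (fun s => β k s i)
              have hAi : (∑ s ∈ Finset.Icc 1 r, β k s i) = A i := congrFun hA i
              have hCi : (∑ s ∈ Finset.Icc 1 (r + 1), β k s i) = C i := congrFun hC i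
              rw [← hCi, h1, hAi]
            have hA01 : ∀ i, A i = 0 ∨ A i = 1 := fun i => Dfrom01 h01 hr1 (by omega) i
            have hC01 : ∀ i, C i = 0 ∨ C i = 1 := fun i => Dfrom01 h01 (by omega) (by omega) i
            have hB01 : ∀ i, B i = 0 ∨ B i = 1 := by
              by_cases hrk' : r + 1 < k
              · intro i
                rw [hBdef, hmid k (r + 1) (by omega) hrk' (by omega)]
                exact Dq01 _ _ i
              · have hre : r + 1 = k := by omega
                intro i
                have hl := hlast k hk2 (by omega)
                rw [hBdef, hre, hl]
                show α k i - Dq (α (k - 1)) (α k) i = 0 ∨ α k i - Dq (α (k - 1)) (α k) i = 1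
                have h1 := h01 k (by omega) (by omega) i
                rcases Dq01 (α (k - 1)) (α k) i with h2 | h2
                · omega
                · have h3 := Dq_eq_one_imp h2
                  omega
            have habAB : ∀ i, A i = 1 → B i = 0 := by
              intro i h1
              have h2 : A i + B i = C i := congrFun hsumC i
              rcases hB01 i with h | h
              · exact h
              · rcases hC01 i with h' | h' <;> omega
            have hs' : ∀ i, α (k + 1) i = 0 ∨ α (k + 1) i = 1 := h01 (k + 1) (by omega) hkn
            have hfa' : ∀ j, Zq A (α (k + 1)) j ≠ ⊤ := by
              intro j
              have h1 := hfinD r (k - r) hr1 (by omega) j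
              rwa [show r + (k - r) + 1 = k + 1 from by omega] at h1
            have hSr : (fun i => ∑ s ∈ Finset.Icc 1 r, β (k + 1) s i) = Dq A (α (k + 1)) := by
              have h2 : Dfrom α r (k + 1 - r) = Dq A (α (k + 1)) := by
                rw [show k + 1 - r = (k - r) + 1 from by omega, Dfrom_succ,
                  show r + (k - r) + 1 = k + 1 from by omega]
              rw [ihr (by omega) (by omega), h2]
            have hfunrw : (fun i => α (k + 1) i - ∑ s ∈ Finset.Icc 1 r, β (k + 1) s i)
                = (fun i => α (k + 1) i - Dq A (α (k + 1)) i) := by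
              funext i
              have h3 : (∑ s ∈ Finset.Icc 1 r, β (k + 1) s i) = Dq A (α (k + 1)) i :=
                congrFun hSr i
              rw [h3]
            have hfb' : ∀ j, Zq B (fun i => α (k + 1) i - Dq A (α (k + 1)) i) j ≠ ⊤ := by
              intro j
              have h1 := hfinβ (k + 1) (r + 1) (by omega) (by omega) (by omega) j
              rw [show k + 1 - 1 = k from rfl, show r + 1 - 1 = r from rfl] at h1
              rwa [hfunrw] at h1
            have hDadd := fun j => Dq_add hA01 hB01 hs' hfa' hfb' j
            have hgoalR : Dfrom α (r + 1) (k + 1 - (r + 1)) = Dq C (α (k + 1)) := by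
              rw [show k + 1 - (r + 1) = (k - (r + 1)) + 1 from by omega, Dfrom_succ,
                show (r + 1) + (k - (r + 1)) + 1 = k + 1 from by omega]
            rw [hgoalR]
            refine funext fun i => ?_
            show (∑ s ∈ Finset.Icc 1 (r + 1), β (k + 1) s i) = Dq C (α (k + 1)) i
            have h4 : (∑ s ∈ Finset.Icc 1 r, β (k + 1) s i) = Dq A (α (k + 1)) i :=
              congrFun hSr i
            have h5 : β (k + 1) (r + 1) i
                = Dq B (fun i => α (k + 1) i - Dq A (α (k + 1)) i) i := by
              have hm := hmid (k + 1) (r + 1) (by omega) (by omega) hkn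
              rw [show k + 1 - 1 = k from rfl, show r + 1 - 1 = r from rfl, hfunrw] at hm
              rw [hm]
            calc (∑ s ∈ Finset.Icc 1 (r + 1), β (k + 1) s i)
                = (∑ s ∈ Finset.Icc 1 r, β (k + 1) s i) + β (k + 1) (r + 1) i :=
                  Finset.sum_Icc_succ_top (by omega) _
              _ = Dq A (α (k + 1)) i
                  + Dq B (fun i => α (k + 1) i - Dq A (α (k + 1)) i) i := by rw [h4, h5]
              _ = Dq (fun i => A i + B i) (α (k + 1)) i := (hDadd i).symm
              _ = Dq C (α (k + 1)) i := by rw [hsumC]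
          · -- last case : r = k
            have hre : r = k := by omega
            subst hre
            have hSk : (fun i => ∑ s ∈ Finset.Icc 1 r, β (r + 1) s i)
                = Dfrom α r (r + 1 - r) := ihr (by omega) (by omega)
            have h1 : Dfrom α r (r + 1 - r) = Dq (α r) (α (r + 1)) := by
              rw [show r + 1 - r = 1 from by omega]
              rfl
            have hlast' := hlast (r + 1) (by omega) hkn
            rw [show r + 1 - 1 = r from rfl] at hlast'
            refine funext fun i => ?_
            show (∑ s ∈ Finset.Icc 1 (r + 1), β (r + 1) s i)
                = Dfrom α (r + 1) (r + 1 - (r + 1)) i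
            rw [show r + 1 - (r + 1) = 0 from by omega]
            show (∑ s ∈ Finset.Icc 1 (r + 1), β (r + 1) s i) = α (r + 1) i
            have h2 : (∑ s ∈ Finset.Icc 1 r, β (r + 1) s i) = Dq (α r) (α (r + 1)) i := by
              have h3 : (∑ s ∈ Finset.Icc 1 r, β (r + 1) s i) = Dfrom α r (r + 1 - r) i :=
                congrFun hSk i
              rw [h1] at h3
              exact h3
            have h3 : β (r + 1) (r + 1) i = α (r + 1) i - Dq (α r) (α (r + 1)) i := by
              rw [hlast']
            calc (∑ s ∈ Finset.Icc 1 (r + 1), β (r + 1) s i)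
                = (∑ s ∈ Finset.Icc 1 r, β (r + 1) s i) + β (r + 1) (r + 1) i :=
                  Finset.sum_Icc_succ_top (by omega) _
              _ = Dq (α r) (α (r + 1)) i + (α (r + 1) i - Dq (α r) (α (r + 1)) i) := by
                  rw [h2, h3]
              _ = α (r + 1) i := by ring
  intro r k hr hrk hkn i
  exact congrFun (key k (le_trans hr hrk) hkn r hr hrk) i
end

section
/- The discrete HAD jump operator A_j preserves the partial order on configurations: if η ≤ η' pointwise and both have a particle at some site ≤ j, then A_j η ≤ A_j η' pointwise, where A_j moves the closest particle weakly to the left of j to site j. -/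
/-!
Every particle of `η` is a particle of `η'`, so `i(η,j) ≤ i(η',j)`. The only site where
`A_j η'` falls below `η'` is `i(η',j)`; a particle of `η` there would lie between
`i(η,j)` and `j`, so it must be the one at `i(η,j)`, which `A_j η` removes as well.
-/

noncomputable section
open Classical

/-- Position of the closest particle of `η` weakly to the left of `j`:
`i(η,j) = max {k ≤ j : η k = 1}`. -/
def ipos (η : ℤ → ℤ) (j : ℤ) : ℤ := sSup {k : ℤ | k ≤ j ∧ η k = 1}

/-- Discrete HAD jump operator at `j`: the closest particle weakly to the left of `j`
jumps to `j`. -/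
def Ahad (j : ℤ) (η : ℤ → ℤ) : ℤ → ℤ := fun k =>
  if k = j then 1
  else if k = ipos η j then 0
  else η k

end

section ipos

variable {η η' : ℤ → ℤ} {j : ℤ}

lemma bddAbove_particles_le (η : ℤ → ℤ) (j : ℤ) : BddAbove {k : ℤ | k ≤ j ∧ η k = 1} :=
  ⟨j, fun _ hk => hk.1⟩

lemma ipos_mem (hex : ∃ k ≤ j, η k = 1) : ipos η j ≤ j ∧ η (ipos η j) = 1 :=
  Int.csSup_mem hex (bddAbove_particles_le η j)

lemma le_ipos {k : ℤ} (hkj : k ≤ j) (hk : η k = 1) : k ≤ ipos η j :=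
  le_csSup (bddAbove_particles_le η j) ⟨hkj, hk⟩

lemma ipos_mono (hsub : ∀ x, η x = 1 → η' x = 1) (hex : ∃ k ≤ j, η k = 1) :
    ipos η j ≤ ipos η' j :=
  have hmem := ipos_mem hex
  le_ipos hmem.1 (hsub _ hmem.2)

end ipos

lemma Ahad_mono {j : ℤ} {η η' : ℤ → ℤ} (hle : η ≤ η') (hsub : ∀ x, η x = 1 → η' x = 1)
    (hex : ∃ k ≤ j, η k = 1) : Ahad j η ≤ Ahad j η' := by
  have hex' : ∃ k ≤ j, η' k = 1 := hex.imp fun k ⟨hkj, hk⟩ => ⟨hkj, hsub k hk⟩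
  have hI := (ipos_mem hex).2
  obtain ⟨hI'j, hI'⟩ := ipos_mem hex'
  have hII' := ipos_mono hsub hex
  intro x
  unfold Ahad
  split_ifs with hxj hxI hxI' hxI'
  iterate 2 exact le_rfl
  · rw [hxI, hsub _ hI]
    exact zero_le_one
  · -- `η x = 1` would put `x` between `i(η,j)` and `j`, forcing `x = i(η,j)`
    subst hxI'
    have hηx : η (ipos η' j) ≠ 1 := fun h => hxI (le_antisymm (le_ipos hI'j h) hII')
    have hle' : η (ipos η' j) ≤ 1 := hI' ▸ hle _
    exact Int.lt_add_one_iff.mp (lt_of_le_of_ne hle' hηx)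
  · exact hle x

theorem had_jump_monotone_general (j : ℤ) (η η' : ℤ → ℤ)
    (hη' : ∀ x, η' x = 0 ∨ η' x = 1)
    (hle : ∀ x, η x ≤ η' x)
    (hex : ∃ k ≤ j, η k = 1) :
    ∀ x, Ahad j η x ≤ Ahad j η' x := by
  have hsub : ∀ x, η x = 1 → η' x = 1 := fun x hx =>
    (hη' x).resolve_left fun h => by linarith [hle x]
  exact Ahad_mono hle hsub hex

/-- The discrete HAD jump operator `A_j` preserves the pointwise partial order on
configurations in `{0,1}^ℤ`, provided both configurations have a particle weakly to the
left of `j`. -/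
theorem had_jump_monotone (j : ℤ) (η η' : ℤ → ℤ)
    (hη : ∀ x, η x = 0 ∨ η x = 1) (hη' : ∀ x, η' x = 0 ∨ η' x = 1)
    (hle : ∀ x, η x ≤ η' x)
    (hex : ∃ k ≤ j, η k = 1) (hex' : ∃ k ≤ j, η' k = 1) :
    ∀ x, Ahad j η x ≤ Ahad j η' x :=
  had_jump_monotone_general j η η' hη' hle hex
end

section
/- For the stationary discrete-time M/M/1 queue with Bernoulli(ρ¹) arrivals and Bernoulli(ρ²) services, ρ¹ < ρ², the density of unused services (sites j with α²(j)=1 but D(α¹,α²)(j)=0) equals ρ² − ρ¹. -/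
set_option linter.unusedSectionVars false
set_option linter.deprecated false
set_option maxHeartbeats 1000000


open scoped ENNReal
open Classical

open Filter Topology

namespace USD
abbrev L := Bool × Bool
noncomputable section
variable (p1 p2 : ℝ)

def w (l : L) : ℝ := (if l.1 then p1 else 1 - p1) * (if l.2 then p2 else 1 - p2)
def xx (l : L) : ℤ := (if l.1 then 1 else 0) - (if l.2 then 1 else 0)
def wt (c : List L) : ℝ := (c.map (w p1 p2)).prod
def T (c : List L) : ℤ := (c.map xx).sum
def pp : ℝ := p1 * (1 - p2)
def qq : ℝ := (1 - p1) * p2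
def th : ℝ := qq p1 p2 / pp p1 p2
def mm : ℝ := pp p1 p2 - qq p1 p2
def vv : ℝ := ∑ l : L, w p1 p2 l * ((xx l : ℝ) - mm p1 p2)^2

def words : ℕ → Finset (List L)
  | 0 => {[]}
  | n+1 => Finset.univ.biUnion fun l => ((words n).image (l :: ·))

def WS (n : ℕ) (f : List L → ℝ) : ℝ := ∑ c ∈ words n, f c

def Low (c : List L) : Prop := ∀ k, T (c.take k) ≤ 0
def FH (c : List L) : Prop := (∀ k < c.length, T (c.take k) ≤ 0) ∧ 0 < T c
def sig (c : List L) : ℕ := sInf {k | 0 < T (c.take k)}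
def Fq (t : ℕ) : ℝ := WS t (fun a => if FH a then wt p1 p2 a else 0)
def Cq (n : ℕ) : ℝ := ∑ t ∈ Finset.Icc 1 n, Fq p1 p2 t
def Rq (n : ℕ) : ℝ := WS n (fun c => if Low c then wt p1 p2 c * th p1 p2 ^ T c else 0)
def Gq (n : ℕ) : ℝ := WS n (fun c => if Low c then wt p1 p2 c else 0)
def Eq' (n : ℕ) : ℝ := WS (n+1) (fun c => if (∃ d, c = (false,true) :: d ∧ Low d) then wt p1 p2 c else 0)
lemma mem_words {n : ℕ} {c : List L} : c ∈ words n ↔ c.length = n := by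
  induction n generalizing c with
  | zero => simp [words, List.length_eq_zero_iff]
  | succ n ih =>
    simp only [words, Finset.mem_biUnion, Finset.mem_univ, true_and, Finset.mem_image]
    constructor
    · rintro ⟨l, d, hd, rfl⟩; simp [ih.1 hd]
    · intro h
      cases c with
      | nil => simp at h
      | cons l d => exact ⟨l, d, ih.2 (by simpa using h), rfl⟩

lemma WS_succ (n : ℕ) (f : List L → ℝ) :
    WS (n+1) f = ∑ l : L, WS n (fun c => f (l :: c)) := by
  unfold WS
  rw [show words (n+1) = Finset.univ.biUnion fun l => ((words n).image (l :: ·)) from rfl,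
    Finset.sum_biUnion]
  · refine Finset.sum_congr rfl fun l _ => ?_
    rw [Finset.sum_image]
    intro a _ b _ h; simpa using h
  · intro a _ b _ hab
    simp only [Finset.disjoint_left, Finset.mem_image]
    rintro c ⟨d, _, rfl⟩ ⟨e, _, h⟩
    exact hab (by simpa using (List.cons_eq_cons.1 h).1.symm)

lemma WS_zero (f : List L → ℝ) : WS 0 f = f [] := by simp [WS, words]

lemma WS_append (t u : ℕ) (f : List L → ℝ) :
    WS (t+u) f = WS t (fun a => WS u (fun b => f (a ++ b))) := by
  induction t generalizing f with
  | zero => rw [Nat.zero_add, WS_zero]; simp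
  | succ t ih =>
    rw [Nat.succ_add, WS_succ, WS_succ]
    exact Finset.sum_congr rfl fun l _ => by rw [ih]; simp

@[simp] lemma wt_nil : wt p1 p2 [] = 1 := by simp [wt]
@[simp] lemma wt_cons (l : L) (c : List L) : wt p1 p2 (l :: c) = w p1 p2 l * wt p1 p2 c := by
  simp [wt]
lemma wt_append (a b : List L) : wt p1 p2 (a ++ b) = wt p1 p2 a * wt p1 p2 b := by
  simp [wt]
@[simp] lemma T_nil : T [] = 0 := by simp [T]
@[simp] lemma T_cons (l : L) (c : List L) : T (l :: c) = xx l + T c := by simp [T]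
lemma T_append (a b : List L) : T (a ++ b) = T a + T b := by simp [T]

lemma sum_L (f : L → ℝ) :
    ∑ l : L, f l = f (true,true) + f (true,false) + (f (false,true) + f (false,false)) := by
  rw [Fintype.sum_prod_type]
  simp [Fintype.sum_bool]

variable (h1 : 0 < p1) (h12 : p1 < p2) (h2 : p2 < 1)
include h1 h12 h2

lemma hp : 0 < pp p1 p2 := by unfold pp; nlinarith
lemma hq : 0 < qq p1 p2 := by unfold qq; nlinarith
lemma hpq : pp p1 p2 < qq p1 p2 := by unfold pp qq; nlinarith
lemma hth : 1 < th p1 p2 := by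
  unfold th
  rw [lt_div_iff₀ (hp p1 p2 h1 h12 h2), one_mul]
  exact hpq p1 p2 h1 h12 h2
lemma hm_neg : mm p1 p2 < 0 := by
  have := hpq p1 p2 h1 h12 h2; unfold mm; linarith
lemma w_nonneg (l : L) : 0 ≤ w p1 p2 l := by
  unfold w; cases l with | mk a s => cases a <;> cases s <;> simp <;> nlinarith
lemma vv_nonneg : 0 ≤ vv p1 p2 := by
  apply Finset.sum_nonneg
  intro l _
  exact mul_nonneg (w_nonneg p1 p2 h1 h12 h2 l) (sq_nonneg _)
lemma sumw : ∑ l : L, w p1 p2 l = 1 := by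
  rw [sum_L]; unfold w; simp; ring
lemma sumwx : ∑ l : L, w p1 p2 l * (xx l : ℝ) = mm p1 p2 := by
  rw [sum_L]; unfold w xx mm pp qq; simp; ring
lemma sumwxm : ∑ l : L, w p1 p2 l * ((xx l : ℝ) - mm p1 p2) = 0 := by
  have h := sumwx p1 p2 h1 h12 h2
  have h' := sumw p1 p2 h1 h12 h2
  calc ∑ l : L, w p1 p2 l * ((xx l : ℝ) - mm p1 p2)
      = (∑ l : L, w p1 p2 l * (xx l : ℝ)) - (∑ l : L, w p1 p2 l) * mm p1 p2 := by
        rw [Finset.sum_mul, ← Finset.sum_sub_distrib]; congr 1; ext l; ring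
    _ = 0 := by rw [h, h', one_mul, sub_self]
lemma sumwth : ∑ l : L, w p1 p2 l * th p1 p2 ^ xx l = 1 := by
  have hp0 := hp p1 p2 h1 h12 h2
  have hq0 := hq p1 p2 h1 h12 h2
  rw [sum_L]
  have t1 : w p1 p2 (true,true) * th p1 p2 ^ xx (true,true) = p1 * p2 := by
    simp [w, xx]
  have t2 : w p1 p2 (true,false) * th p1 p2 ^ xx (true,false) = pp p1 p2 * (qq p1 p2 / pp p1 p2) := by
    simp [w, xx, th, pp]
  have t3 : w p1 p2 (false,true) * th p1 p2 ^ xx (false,true) = qq p1 p2 * (pp p1 p2 / qq p1 p2) := by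
    have hx : (xx (false,true) : ℤ) = -1 := rfl
    rw [hx, zpow_neg, zpow_one]
    unfold th w qq
    rw [inv_div]
    norm_num
  have t4 : w p1 p2 (false,false) * th p1 p2 ^ xx (false,false) = (1-p1) * (1-p2) := by
    simp [w, xx]
  rw [t1, t2, t3, t4, mul_div_cancel₀ _ hp0.ne', mul_div_cancel₀ _ hq0.ne']
  unfold pp qq
  ring

omit h1 h12 h2 in
lemma WS_const_mul (n : ℕ) (a : ℝ) (f : List L → ℝ) :
    WS n (fun c => a * f c) = a * WS n f := by
  simp [WS, Finset.mul_sum]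

omit h1 h12 h2 in
lemma WS_add (n : ℕ) (f g : List L → ℝ) :
    WS n (fun c => f c + g c) = WS n f + WS n g := by
  simp [WS, Finset.sum_add_distrib]

omit h1 h12 h2 in
lemma WS_congr {n : ℕ} {f g : List L → ℝ} (h : ∀ c ∈ words n, f c = g c) :
    WS n f = WS n g := Finset.sum_congr rfl h

omit h1 h12 h2 in
lemma WS_le {n : ℕ} {f g : List L → ℝ} (h : ∀ c ∈ words n, f c ≤ g c) :
    WS n f ≤ WS n g := Finset.sum_le_sum h

omit h1 h12 h2 in
lemma WS_nonneg {n : ℕ} {f : List L → ℝ} (h : ∀ c, 0 ≤ f c) : 0 ≤ WS n f :=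
  Finset.sum_nonneg fun c _ => h c

lemma wt_nonneg (c : List L) : 0 ≤ wt p1 p2 c := by
  apply List.prod_nonneg
  intro a ha
  obtain ⟨l, _, rfl⟩ := List.mem_map.1 ha
  exact w_nonneg p1 p2 h1 h12 h2 l

lemma WS_wt (n : ℕ) : WS n (wt p1 p2) = 1 := by
  induction n with
  | zero => simp [WS_zero, wt]
  | succ n ih =>
    rw [WS_succ]
    have : ∀ l : L, WS n (fun c => wt p1 p2 (l :: c)) = w p1 p2 l := by
      intro l
      calc WS n (fun c => wt p1 p2 (l :: c)) = WS n (fun c => w p1 p2 l * wt p1 p2 c) := by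
            apply WS_congr; intro c _; rw [wt_cons]
        _ = w p1 p2 l := by rw [WS_const_mul, ih, mul_one]
    rw [Finset.sum_congr rfl fun l _ => this l]
    exact sumw p1 p2 h1 h12 h2

lemma th_pos : 0 < th p1 p2 := lt_trans one_pos (hth p1 p2 h1 h12 h2)

lemma WS_wth (n : ℕ) : WS n (fun c => wt p1 p2 c * th p1 p2 ^ T c) = 1 := by
  have hθ : th p1 p2 ≠ 0 := (th_pos p1 p2 h1 h12 h2).ne'
  induction n with
  | zero => simp [WS_zero, wt]
  | succ n ih =>
    rw [WS_succ]
    have : ∀ l : L, WS n (fun c => wt p1 p2 (l :: c) * th p1 p2 ^ T (l :: c))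
        = w p1 p2 l * th p1 p2 ^ xx l := by
      intro l
      calc WS n (fun c => wt p1 p2 (l :: c) * th p1 p2 ^ T (l :: c))
          = WS n (fun c => (w p1 p2 l * th p1 p2 ^ xx l) * (wt p1 p2 c * th p1 p2 ^ T c)) := by
            apply WS_congr; intro c _
            rw [wt_cons, T_cons, zpow_add₀ hθ]; ring
        _ = w p1 p2 l * th p1 p2 ^ xx l := by rw [WS_const_mul, ih, mul_one]
    rw [Finset.sum_congr rfl fun l _ => this l]
    exact sumwth p1 p2 h1 h12 h2

lemma M1 (n : ℕ) : WS n (fun c => wt p1 p2 c * ((T c : ℝ) - n * mm p1 p2)) = 0 := by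
  induction n with
  | zero => simp [WS_zero]
  | succ n ih =>
    rw [WS_succ]
    have e : ∀ l : L, WS n (fun c => wt p1 p2 (l::c) * ((T (l::c) : ℝ) - (n+1 : ℕ) * mm p1 p2))
        = w p1 p2 l * ((xx l : ℝ) - mm p1 p2) := by
      intro l
      have heq : WS n (fun c => wt p1 p2 (l::c) * ((T (l::c) : ℝ) - (n+1:ℕ) * mm p1 p2))
          = WS n (fun c => (w p1 p2 l * ((xx l:ℝ) - mm p1 p2)) * wt p1 p2 c
              + w p1 p2 l * (wt p1 p2 c * ((T c:ℝ) - n * mm p1 p2))) := by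
        apply WS_congr; intro c _
        rw [wt_cons, T_cons]; push_cast; ring
      rw [heq, WS_add, WS_const_mul, WS_const_mul,
        WS_wt p1 p2 h1 h12 h2, ih, mul_zero, add_zero, mul_one]
    rw [Finset.sum_congr rfl fun l _ => e l]
    exact sumwxm p1 p2 h1 h12 h2

lemma M2 (n : ℕ) : WS n (fun c => wt p1 p2 c * ((T c : ℝ) - n * mm p1 p2)^2)
    = n * vv p1 p2 := by
  induction n with
  | zero => simp [WS_zero]
  | succ n ih =>
    rw [WS_succ]
    have e : ∀ l : L, WS n (fun c => wt p1 p2 (l::c) * ((T (l::c) : ℝ) - (n+1 : ℕ) * mm p1 p2)^2)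
        = w p1 p2 l * ((xx l : ℝ) - mm p1 p2)^2 + w p1 p2 l * ((xx l : ℝ) - mm p1 p2) * 0 * 2
          + w p1 p2 l * (n * vv p1 p2) := by
      intro l
      have heq : WS n (fun c => wt p1 p2 (l::c) * ((T (l::c) : ℝ) - (n+1:ℕ) * mm p1 p2)^2)
          = WS n (fun c => (w p1 p2 l * ((xx l:ℝ) - mm p1 p2)^2) * wt p1 p2 c
              + ((w p1 p2 l * ((xx l:ℝ) - mm p1 p2) * 2) * (wt p1 p2 c * ((T c:ℝ) - n * mm p1 p2))
              + w p1 p2 l * (wt p1 p2 c * ((T c:ℝ) - n * mm p1 p2)^2))) := by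
        apply WS_congr; intro c _
        rw [wt_cons, T_cons]; push_cast; ring
      rw [heq, WS_add, WS_add, WS_const_mul,
        WS_const_mul, WS_const_mul, WS_wt p1 p2 h1 h12 h2,
        M1 p1 p2 h1 h12 h2, ih]
      ring
    rw [Finset.sum_congr rfl fun l _ => e l]
    have : ∑ l : L, (w p1 p2 l * ((xx l : ℝ) - mm p1 p2)^2
        + w p1 p2 l * ((xx l : ℝ) - mm p1 p2) * 0 * 2 + w p1 p2 l * (n * vv p1 p2))
        = vv p1 p2 + (n * vv p1 p2) := by
      rw [Finset.sum_add_distrib, Finset.sum_add_distrib]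
      have e1 : ∑ l : L, w p1 p2 l * ((xx l : ℝ) - mm p1 p2) * 0 * 2 = 0 := by simp
      have e2 : ∑ l : L, w p1 p2 l * (n * vv p1 p2) = n * vv p1 p2 := by
        rw [← Finset.sum_mul, sumw p1 p2 h1 h12 h2, one_mul]
      rw [e1, e2, add_zero]
      rfl
    rw [this]
    push_cast; ring

omit h1 h12 h2 in
lemma xx_le_one (l : L) : xx l ≤ 1 := by
  obtain ⟨a, b⟩ := l; cases a <;> cases b <;> simp [xx]

omit h1 h12 h2 in
lemma FH_T_one {c : List L} (h : FH c) : T c = 1 := by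
  have hne : c ≠ [] := by
    rintro rfl
    exact absurd h.2 (by simp)
  have hlt : c.length - 1 < c.length := by
    have := List.length_pos_iff.2 hne; omega
  have hle : T (c.take (c.length - 1)) ≤ 0 := h.1 _ hlt
  have hx : xx (c.getLast hne) ≤ 1 := xx_le_one _
  have hsplit : T c = T (c.take (c.length - 1)) + xx (c.getLast hne) := by
    conv_lhs => rw [← List.dropLast_append_getLast hne]
    rw [T_append, List.dropLast_eq_take]
    simp [T]
  have := h.2
  omega

omit h1 h12 h2 in
lemma sig_zero_iff {c : List L} : sig c = 0 ↔ Low c := by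
  unfold sig Low
  rw [Nat.sInf_eq_zero]
  constructor
  · rintro (h | h)
    · simp [T] at h
    · intro k
      by_contra hk
      push_neg at hk
      exact Set.eq_empty_iff_forall_notMem.1 h k hk
  · intro h
    right
    simp only [Set.eq_empty_iff_forall_notMem, Set.mem_setOf_eq]
    intro k
    exact not_lt.2 (h k)

omit h1 h12 h2 in
lemma sig_le {c : List L} : sig c ≤ c.length := by
  by_cases hS : {k | 0 < T (c.take k)}.Nonempty
  · obtain ⟨k, hk⟩ := hS
    by_cases hkl : k ≤ c.length
    · exact le_trans (Nat.sInf_le hk) hkl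
    · apply Nat.sInf_le
      show 0 < T (c.take c.length)
      rw [List.take_length]
      have hk' : 0 < T (c.take k) := hk
      rwa [List.take_of_length_le (le_of_lt (not_le.1 hkl))] at hk' 
  · show sInf _ ≤ _
    rw [Set.not_nonempty_iff_eq_empty.1 hS, Nat.sInf_empty]
    exact Nat.zero_le _

omit h1 h12 h2 in
lemma sig_append {a b : List L} (ha : a ≠ []) : sig (a ++ b) = a.length ↔ FH a := by
  have hlen : 0 < a.length := List.length_pos_iff.2 ha
  constructor
  · intro h
    have hne : {k | 0 < T ((a++b).take k)}.Nonempty := by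
      by_contra hS
      rw [sig, Set.not_nonempty_iff_eq_empty.1 hS, Nat.sInf_empty] at h
      omega
    have hmem := Nat.sInf_mem hne
    rw [show sInf {k | 0 < T ((a++b).take k)} = sig (a++b) from rfl, h,
      Set.mem_setOf_eq, List.take_left] at hmem
    refine ⟨fun k hk => ?_, hmem⟩
    have hnm : k ∉ {k | 0 < T ((a++b).take k)} :=
      Nat.notMem_of_lt_sInf (by rw [show sInf {k | 0 < T ((a++b).take k)} = sig (a++b) from rfl, h]; exact hk)
    rw [Set.mem_setOf_eq, List.take_append_of_le_length (le_of_lt hk)] at hnm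
    exact not_lt.1 hnm
  · intro h
    have hmem : a.length ∈ {k | 0 < T ((a++b).take k)} := by
      rw [Set.mem_setOf_eq, List.take_left]
      exact h.2
    refine le_antisymm (Nat.sInf_le hmem) ?_
    by_contra hlt
    push_neg at hlt
    have hmem' : 0 < T ((a++b).take (sig (a++b))) :=
      Nat.sInf_mem (⟨_, hmem⟩ : {k | 0 < T ((a++b).take k)}.Nonempty)
    rw [List.take_append_of_le_length (le_of_lt hlt)] at hmem'
    exact absurd hmem' (not_lt.2 (h.1 _ hlt))

omit h1 h12 h2 in
lemma WS_fiber (n : ℕ) (f : List L → ℝ) :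
    WS n f = ∑ t ∈ Finset.range (n+1), WS n (fun c => if sig c = t then f c else 0) := by
  unfold WS
  rw [Finset.sum_comm]
  refine Finset.sum_congr rfl fun c hc => ?_
  rw [Finset.sum_ite_eq (Finset.range (n+1)) (sig c) (fun _ => f c), if_pos]
  rw [Finset.mem_range]
  have : sig c ≤ c.length := sig_le
  rw [mem_words.1 hc] at this
  omega

omit h1 h12 h2 in
lemma WS_split (t u : ℕ) (f : List L → ℝ) (ht : 1 ≤ t) :
    WS (t+u) (fun c => if sig c = t then f c else 0)
      = WS t (fun a => if FH a then WS u (fun b => f (a ++ b)) else 0) := by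
  rw [WS_append]
  refine WS_congr fun a ha => ?_
  have halen : a.length = t := mem_words.1 ha
  have hane : a ≠ [] := by
    intro h
    rw [h] at halen
    simp at halen
    omega
  by_cases hFH : FH a
  · rw [if_pos hFH]
    refine WS_congr fun b _ => ?_
    rw [if_pos (by rw [← halen]; exact (sig_append hane).2 hFH)]
  · rw [if_neg hFH]
    have hz : WS u (fun b => if sig (a++b) = t then f (a++b) else 0) = WS u (fun _ => 0) := by
      refine WS_congr fun b _ => ?_
      rw [if_neg]
      intro hEq
      exact hFH ((sig_append hane).1 (by rw [halen]; exact hEq))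
    rw [hz]
    simp [WS]

lemma split_eval (t u : ℕ) (ht : 1 ≤ t) :
    WS (t+u) (fun c => if sig c = t then wt p1 p2 c else 0) = Fq p1 p2 t := by
  rw [WS_split t u _ ht]
  unfold Fq
  refine WS_congr fun a _ => ?_
  by_cases hFH : FH a
  · rw [if_pos hFH, if_pos hFH]
    have : WS u (fun b => wt p1 p2 (a ++ b)) = wt p1 p2 a := by
      have e : WS u (fun b => wt p1 p2 (a ++ b)) = WS u (fun b => wt p1 p2 a * wt p1 p2 b) :=
        WS_congr fun b _ => by rw [wt_append]
      rw [e, WS_const_mul, WS_wt p1 p2 h1 h12 h2, mul_one]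
    rw [this]
  · rw [if_neg hFH, if_neg hFH]

lemma split_eval_th (t u : ℕ) (ht : 1 ≤ t) :
    WS (t+u) (fun c => if sig c = t then wt p1 p2 c * th p1 p2 ^ T c else 0)
      = th p1 p2 * Fq p1 p2 t := by
  have hθ : th p1 p2 ≠ 0 := (th_pos p1 p2 h1 h12 h2).ne'
  rw [WS_split t u _ ht]
  unfold Fq
  rw [← WS_const_mul]
  refine WS_congr fun a _ => ?_
  by_cases hFH : FH a
  · rw [if_pos hFH, if_pos hFH]
    have hTa : T a = 1 := FH_T_one hFH
    have : WS u (fun b => wt p1 p2 (a ++ b) * th p1 p2 ^ T (a ++ b))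
        = (th p1 p2 * wt p1 p2 a) * 1 := by
      rw [← WS_wth p1 p2 h1 h12 h2 u, ← WS_const_mul]
      refine WS_congr fun b _ => ?_
      rw [wt_append, T_append, hTa, zpow_add₀ hθ, zpow_one]
      ring
    rw [this, mul_one]
  · rw [if_neg hFH, if_neg hFH, mul_zero]

omit h1 h12 h2 in
lemma range_succ_decomp (n : ℕ) : Finset.range (n+1) = insert 0 (Finset.Icc 1 n) := by
  ext k
  simp only [Finset.mem_range, Finset.mem_insert, Finset.mem_Icc]
  omega

lemma identity_G (n : ℕ) : Gq p1 p2 n + Cq p1 p2 n = 1 := by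
  have h0 := WS_wt p1 p2 h1 h12 h2 n
  rw [WS_fiber n (wt p1 p2), range_succ_decomp, Finset.sum_insert (by simp)] at h0
  have e0 : WS n (fun c => if sig c = 0 then wt p1 p2 c else 0) = Gq p1 p2 n := by
    unfold Gq
    refine WS_congr fun c _ => ?_
    by_cases h : Low c
    · rw [if_pos (sig_zero_iff.2 h), if_pos h]
    · rw [if_neg (fun hs => h (sig_zero_iff.1 hs)), if_neg h]
  have et : ∀ t ∈ Finset.Icc 1 n,
      WS n (fun c => if sig c = t then wt p1 p2 c else 0) = Fq p1 p2 t := by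
    intro t htm
    rw [Finset.mem_Icc] at htm
    rw [show n = t + (n - t) from by omega]
    exact split_eval p1 p2 h1 h12 h2 t (n - t) htm.1
  rw [e0, Finset.sum_congr rfl et] at h0
  exact h0

lemma identity_R (n : ℕ) : Rq p1 p2 n + th p1 p2 * Cq p1 p2 n = 1 := by
  have h0 := WS_wth p1 p2 h1 h12 h2 n
  rw [WS_fiber n _, range_succ_decomp, Finset.sum_insert (by simp)] at h0
  have e0 : WS n (fun c => if sig c = 0 then wt p1 p2 c * th p1 p2 ^ T c else 0) = Rq p1 p2 n := by
    unfold Rq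
    refine WS_congr fun c _ => ?_
    by_cases h : Low c
    · rw [if_pos (sig_zero_iff.2 h), if_pos h]
    · rw [if_neg (fun hs => h (sig_zero_iff.1 hs)), if_neg h]
  have et : ∀ t ∈ Finset.Icc 1 n,
      WS n (fun c => if sig c = t then wt p1 p2 c * th p1 p2 ^ T c else 0)
        = th p1 p2 * Fq p1 p2 t := by
    intro t htm
    rw [Finset.mem_Icc] at htm
    rw [show n = t + (n - t) from by omega]
    exact split_eval_th p1 p2 h1 h12 h2 t (n - t) htm.1
  rw [e0, Finset.sum_congr rfl et, ← Finset.mul_sum] at h0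
  exact h0

lemma Rq_nonneg (n : ℕ) : 0 ≤ Rq p1 p2 n := by
  apply WS_nonneg
  intro c
  split
  · exact mul_nonneg (wt_nonneg p1 p2 h1 h12 h2 c)
      (zpow_nonneg (th_pos p1 p2 h1 h12 h2).le _)
  · exact le_refl 0

lemma Rq_le (K n : ℕ) (hK : (K:ℝ) < n * (qq p1 p2 - pp p1 p2)) :
    Rq p1 p2 n ≤ th p1 p2 ^ (-(K:ℤ))
      + n * vv p1 p2 / (n * (qq p1 p2 - pp p1 p2) - K)^2 := by
  have hθ0 : 0 < th p1 p2 := th_pos p1 p2 h1 h12 h2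
  have hθ1 : 1 < th p1 p2 := hth p1 p2 h1 h12 h2
  set a : ℝ := qq p1 p2 - pp p1 p2 with ha_def
  set D : ℝ := n * a - K with hD_def
  have hD0 : 0 < D := by rw [hD_def]; linarith
  have hD2 : 0 < D^2 := pow_pos hD0 2
  have key : ∀ c ∈ words n, (if Low c then wt p1 p2 c * th p1 p2 ^ T c else 0)
      ≤ wt p1 p2 c * th p1 p2 ^ (-(K:ℤ))
        + wt p1 p2 c * ((T c : ℝ) - n * mm p1 p2)^2 / D^2 := by
    intro c hc
    have hwt := wt_nonneg p1 p2 h1 h12 h2 c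
    have hterm1 : 0 ≤ wt p1 p2 c * th p1 p2 ^ (-(K:ℤ)) :=
      mul_nonneg hwt (zpow_nonneg hθ0.le _)
    have hterm2 : 0 ≤ wt p1 p2 c * ((T c : ℝ) - n * mm p1 p2)^2 / D^2 :=
      div_nonneg (mul_nonneg hwt (sq_nonneg _)) hD2.le
    by_cases hL : Low c
    · rw [if_pos hL]
      by_cases hTK : T c ≤ -(K:ℤ)
      · have : wt p1 p2 c * th p1 p2 ^ T c ≤ wt p1 p2 c * th p1 p2 ^ (-(K:ℤ)) :=
          mul_le_mul_of_nonneg_left (zpow_le_zpow_right₀ hθ1.le hTK) hwt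
        linarith
      · push_neg at hTK
        have hT0 : T c ≤ 0 := by
          have := hL c.length
          rwa [List.take_length] at this
        have h1' : wt p1 p2 c * th p1 p2 ^ T c ≤ wt p1 p2 c := by
          have : th p1 p2 ^ T c ≤ 1 := by
            have := zpow_le_zpow_right₀ hθ1.le hT0
            rwa [zpow_zero] at this
          nlinarith
        have hcast : -(K:ℝ) < (T c : ℝ) := by exact_mod_cast hTK
        have hDle : D ≤ (T c : ℝ) - n * mm p1 p2 := by
          have : mm p1 p2 = -a := by rw [ha_def]; unfold mm; ring
          rw [this, hD_def]
          linarith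
        have hsq : D^2 ≤ ((T c : ℝ) - n * mm p1 p2)^2 := by
          have h0 := hD0.le
          nlinarith
        have h2' : wt p1 p2 c ≤ wt p1 p2 c * ((T c : ℝ) - n * mm p1 p2)^2 / D^2 := by
          rw [mul_div_assoc]
          nlinarith [(one_le_div hD2).2 hsq]
        linarith
    · rw [if_neg hL]
      linarith
  have hle := WS_le key
  have hrhs : WS n (fun c => wt p1 p2 c * th p1 p2 ^ (-(K:ℤ))
      + wt p1 p2 c * ((T c : ℝ) - n * mm p1 p2)^2 / D^2)
      = th p1 p2 ^ (-(K:ℤ)) + n * vv p1 p2 / D^2 := by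
    rw [WS_add]
    have e1 : WS n (fun c => wt p1 p2 c * th p1 p2 ^ (-(K:ℤ))) = th p1 p2 ^ (-(K:ℤ)) := by
      have : WS n (fun c => wt p1 p2 c * th p1 p2 ^ (-(K:ℤ)))
          = WS n (fun c => th p1 p2 ^ (-(K:ℤ)) * wt p1 p2 c) := WS_congr fun c _ => by ring
      rw [this, WS_const_mul, WS_wt p1 p2 h1 h12 h2, mul_one]
    have e2 : WS n (fun c => wt p1 p2 c * ((T c : ℝ) - n * mm p1 p2)^2 / D^2)
        = n * vv p1 p2 / D^2 := by
      have : WS n (fun c => wt p1 p2 c * ((T c : ℝ) - n * mm p1 p2)^2 / D^2)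
          = WS n (fun c => (1/D^2) * (wt p1 p2 c * ((T c : ℝ) - n * mm p1 p2)^2)) :=
        WS_congr fun c _ => by ring
      rw [this, WS_const_mul, M2 p1 p2 h1 h12 h2 n]
      ring
    rw [e1, e2]
  rw [hrhs] at hle
  exact hle

lemma tendsto_Rq : Tendsto (fun n => Rq p1 p2 n) atTop (𝓝 0) := by
  have hθ0 : 0 < th p1 p2 := th_pos p1 p2 h1 h12 h2
  have hθ1 : 1 < th p1 p2 := hth p1 p2 h1 h12 h2
  have ha : 0 < qq p1 p2 - pp p1 p2 := sub_pos.2 (hpq p1 p2 h1 h12 h2)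
  have hv := vv_nonneg p1 p2 h1 h12 h2
  set a : ℝ := qq p1 p2 - pp p1 p2 with ha_def
  rw [Metric.tendsto_atTop]
  intro ε hε
  have hinv : Tendsto (fun k : ℕ => (th p1 p2)⁻¹ ^ k) atTop (𝓝 0) :=
    tendsto_pow_atTop_nhds_zero_of_lt_one (inv_nonneg.2 hθ0.le) (inv_lt_one_of_one_lt₀ hθ1)
  obtain ⟨K, hK⟩ := Metric.tendsto_atTop.1 hinv (ε/2) (by linarith)
  have hKval : th p1 p2 ^ (-(K:ℤ)) < ε/2 := by
    have := hK K le_rfl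
    rw [dist_zero_right, Real.norm_eq_abs, abs_of_nonneg (by positivity)] at this
    rwa [zpow_neg, zpow_natCast, ← inv_pow]
  obtain ⟨N2, hN2⟩ := Metric.tendsto_atTop.1
    (tendsto_const_div_atTop_nhds_zero_nat (4 * vv p1 p2 / a^2)) (ε/2) (by linarith)
  obtain ⟨N1, hN1⟩ := exists_nat_ge ((2*K+2)/a)
  refine ⟨max (max N1 N2) 1, fun n hn => ?_⟩
  have hn1 : (1:ℕ) ≤ n := le_trans (le_max_right _ _) hn
  have hnN1 : N1 ≤ n := le_trans (le_trans (le_max_left _ _) (le_max_left _ _)) hn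
  have hnN2 : N2 ≤ n := le_trans (le_trans (le_max_right _ _) (le_max_left _ _)) hn
  have hnR : (1:ℝ) ≤ n := by exact_mod_cast hn1
  have h2K : (2*K+2 : ℝ) ≤ n * a := by
    have h1' : ((2*K+2 : ℝ))/a ≤ (N1 : ℝ) := hN1
    have h2' : ((N1:ℝ)) ≤ n := by exact_mod_cast hnN1
    rw [div_le_iff₀ ha] at h1'
    nlinarith
  have hKlt : (K:ℝ) < n * a := by
    have : (0:ℝ) ≤ K := Nat.cast_nonneg K
    linarith
  have hRle := Rq_le p1 p2 h1 h12 h2 K n hKlt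
  have hD0 : 0 < (n:ℝ) * a - K := by linarith
  have hhalf : (n:ℝ) * a / 2 ≤ (n:ℝ) * a - K := by clear_value a; linarith
  have hhalf0 : 0 < (n:ℝ) * a / 2 := by nlinarith
  have hb1 : (n:ℝ) * vv p1 p2 / ((n:ℝ) * a - K)^2
      ≤ (n:ℝ) * vv p1 p2 / ((n:ℝ) * a / 2)^2 := by
    apply div_le_div_of_nonneg_left (by positivity) (by positivity)
    exact pow_le_pow_left₀ hhalf0.le hhalf 2
  have hb2 : (n:ℝ) * vv p1 p2 / ((n:ℝ) * a / 2)^2 = (4 * vv p1 p2 / a^2) / n := by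
    have hn0 : (n:ℝ) ≠ 0 := by linarith
    field_simp
    ring
  have hb3 : (4 * vv p1 p2 / a^2) / (n:ℝ) < ε/2 := by
    have := hN2 n hnN2
    rw [dist_zero_right, Real.norm_eq_abs, abs_of_nonneg (by positivity)] at this
    exact this
  rw [dist_zero_right, Real.norm_eq_abs, abs_of_nonneg (Rq_nonneg p1 p2 h1 h12 h2 n)]
  calc Rq p1 p2 n ≤ th p1 p2 ^ (-(K:ℤ)) + (n:ℝ) * vv p1 p2 / ((n:ℝ) * a - K)^2 := hRle
    _ < ε/2 + ε/2 := by
        have := lt_of_le_of_lt (le_trans hb1 (le_of_eq hb2)) hb3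
        linarith
    _ = ε := by ring

lemma tendsto_Gq : Tendsto (fun n => Gq p1 p2 n) atTop
    (𝓝 ((qq p1 p2 - pp p1 p2) / qq p1 p2)) := by
  have hθ0 : 0 < th p1 p2 := th_pos p1 p2 h1 h12 h2
  have hq0 : 0 < qq p1 p2 := hq p1 p2 h1 h12 h2
  have hp0 : 0 < pp p1 p2 := hp p1 p2 h1 h12 h2
  have hfun : ∀ n, Gq p1 p2 n = 1 - (1 - Rq p1 p2 n) / th p1 p2 := by
    intro n
    have hG := identity_G p1 p2 h1 h12 h2 n
    have hR := identity_R p1 p2 h1 h12 h2 n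
    have hC : Cq p1 p2 n = (1 - Rq p1 p2 n) / th p1 p2 := by
      field_simp
      linarith
    rw [← hC]
    linarith
  have hlim : Tendsto (fun n => 1 - (1 - Rq p1 p2 n) / th p1 p2) atTop
      (𝓝 (1 - (1 - 0) / th p1 p2)) := by
    apply Tendsto.const_sub
    apply Tendsto.div_const
    exact Tendsto.const_sub _ (tendsto_Rq p1 p2 h1 h12 h2)
  have : (1 : ℝ) - (1 - 0) / th p1 p2 = (qq p1 p2 - pp p1 p2) / qq p1 p2 := by
    unfold th
    field_simp
    ring
  rw [← this]
  exact Tendsto.congr (fun n => (hfun n).symm) hlim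

lemma Eq'_eq (n : ℕ) : Eq' p1 p2 n = qq p1 p2 * Gq p1 p2 n := by
  unfold Eq'
  rw [WS_succ]
  have e : ∀ l : L, WS n (fun d => if (∃ d', l :: d = (false,true) :: d' ∧ Low d')
      then wt p1 p2 (l :: d) else 0)
      = if l = (false,true) then qq p1 p2 * Gq p1 p2 n else 0 := by
    intro l
    by_cases hl : l = (false,true)
    · subst hl
      rw [if_pos rfl]
      unfold Gq
      rw [← WS_const_mul]
      refine WS_congr fun d _ => ?_
      by_cases hd : Low d
      · rw [if_pos ⟨d, rfl, hd⟩, if_pos hd, wt_cons]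
        have : w p1 p2 (false, true) = qq p1 p2 := by
          unfold w qq
          norm_num
        rw [this]
      · rw [if_neg, if_neg hd, mul_zero]
        rintro ⟨d', hd', hlow⟩
        obtain ⟨-, rfl⟩ := List.cons_eq_cons.1 hd'
        exact hd hlow
    · rw [if_neg hl]
      have : WS n (fun d => if (∃ d', l :: d = (false,true) :: d' ∧ Low d')
          then wt p1 p2 (l :: d) else 0) = WS n (fun _ => 0) := by
        refine WS_congr fun d _ => ?_
        rw [if_neg]
        rintro ⟨d', hd', -⟩
        exact hl (List.cons_eq_cons.1 hd').1
      rw [this]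
      simp [WS]
  rw [Finset.sum_congr rfl fun l _ => e l, Finset.sum_ite_eq' Finset.univ ((false,true) : L)
    (fun _ => qq p1 p2 * Gq p1 p2 n), if_pos (Finset.mem_univ _)]

lemma tendsto_Eq' : Tendsto (fun n => Eq' p1 p2 n) atTop (𝓝 (p2 - p1)) := by
  have hq0 : 0 < qq p1 p2 := hq p1 p2 h1 h12 h2
  have h := (tendsto_Gq p1 p2 h1 h12 h2).const_mul (qq p1 p2)
  have e : qq p1 p2 * ((qq p1 p2 - pp p1 p2) / qq p1 p2) = p2 - p1 := by
    rw [mul_div_cancel₀ _ hq0.ne']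
    unfold qq pp
    ring
  rw [e] at h
  exact Tendsto.congr (fun n => (Eq'_eq p1 p2 h1 h12 h2 n).symm) h

section MeasureSide
open MeasureTheory ProbabilityTheory

variable {Ω : Type*} [MeasurableSpace Ω] (μ : Measure Ω) [IsProbabilityMeasure μ]
    (A S : ℤ → Ω → ℤ)

omit h1 h12 h2

def letterF (ω : Ω) (z : ℤ) : L := (decide (A z ω = 1), decide (S z ω = 1))

def obs (n : ℕ) (z : ℤ) (ω : Ω) : List L := (List.range n).map (fun i : ℕ => letterF A S ω (z - (i:ℤ)))

omit [MeasurableSpace Ω] in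
@[simp] lemma obs_length (n : ℕ) (z : ℤ) (ω : Ω) : (obs A S n z ω).length = n := by
  rw [obs, List.length_map, List.length_range]

omit [MeasurableSpace Ω] in
lemma obs_mem_words (n : ℕ) (z : ℤ) (ω : Ω) : obs A S n z ω ∈ words n :=
  mem_words.2 (obs_length A S n z ω)

omit [MeasurableSpace Ω] in
lemma obs_getElem (n : ℕ) (z : ℤ) (ω : Ω) (i : ℕ) (hi : i < n) :
    (obs A S n z ω)[i]'(by simpa using hi) = letterF A S ω (z - i) := by
  simp [obs]

omit [MeasurableSpace Ω] in
lemma obs_succ (n : ℕ) (z : ℤ) (ω : Ω) :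
    obs A S (n+1) z ω = letterF A S ω z :: obs A S n (z-1) ω := by
  unfold obs
  rw [List.range_succ_eq_map, List.map_cons, List.map_map]
  congr 1
  · norm_num
  · apply List.map_congr_left
    intro i _
    simp only [Function.comp_apply]
    congr 1
    push_cast
    ring

omit [MeasurableSpace Ω] in
lemma obs_take (n k : ℕ) (hk : k ≤ n) (z : ℤ) (ω : Ω) :
    (obs A S n z ω).take k = obs A S k z ω := by
  unfold obs
  rw [← List.map_take, List.take_range, min_eq_left hk]

omit [MeasurableSpace Ω] in
lemma decide_eq_iff {x : ℤ} (hx : x = 0 ∨ x = 1) (b : Bool) :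
    decide (x = 1) = b ↔ x = (if b then 1 else 0) := by
  rcases hx with rfl | rfl <;> cases b <;> simp

omit [MeasurableSpace Ω] in
lemma letterF_eq_iff (hA01 : ∀ i ω, A i ω = 0 ∨ A i ω = 1)
    (hS01 : ∀ i ω, S i ω = 0 ∨ S i ω = 1) (ω : Ω) (z : ℤ) (l : L) :
    letterF A S ω z = l ↔ A z ω = (if l.1 then 1 else 0) ∧ S z ω = (if l.2 then 1 else 0) := by
  obtain ⟨b1, b2⟩ := l
  rw [letterF, Prod.mk.injEq]
  rw [decide_eq_iff (hA01 z ω), decide_eq_iff (hS01 z ω)]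

/-- The block of coordinates used by `obs n z`. -/
def blk (n : ℕ) (z : ℤ) : Finset (ℤ ⊕ ℤ) :=
  (Finset.range n).image (fun i : ℕ => Sum.inl (z - (i:ℤ))) ∪ (Finset.range n).image (fun i : ℕ => Sum.inr (z - (i:ℤ)))

/-- The target values on each coordinate. -/
def Bs (z : ℤ) (c : List L) : ℤ ⊕ ℤ → Set ℤ
  | Sum.inl y => {if (c.getD (z - y).toNat default).1 then 1 else 0}
  | Sum.inr y => {if (c.getD (z - y).toNat default).2 then 1 else 0}

omit [MeasurableSpace Ω] in
lemma atom_eq_iInter (hA01 : ∀ i ω, A i ω = 0 ∨ A i ω = 1)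
    (hS01 : ∀ i ω, S i ω = 0 ∨ S i ω = 1) (n : ℕ) (z : ℤ) (c : List L) (hc : c.length = n) :
    {ω | obs A S n z ω = c} = ⋂ k ∈ blk n z, (Sum.elim A S k) ⁻¹' (Bs z c k) := by
  ext ω
  simp only [Set.mem_setOf_eq, Set.mem_iInter, blk, Finset.mem_union, Finset.mem_image,
    Finset.mem_range]
  constructor
  · rintro rfl k hk
    rcases hk with ⟨i, hi, rfl⟩ | ⟨i, hi, rfl⟩ <;>
    · simp only [Sum.elim_inl, Sum.elim_inr, Set.mem_preimage, Bs]
      have hzi : (z - (z - (i:ℤ))).toNat = i := by omega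
      rw [hzi]
      have hgd : (obs A S n z ω).getD i default = letterF A S ω (z - i) := by
        rw [List.getD_eq_getElem _ _ (by simpa using hi), obs_getElem A S n z ω i hi]
      rw [hgd]
      rcases hA01 (z - (i:ℤ)) ω with h | h <;> rcases hS01 (z - (i:ℤ)) ω with h' | h' <;>
        simp [letterF, h, h', Set.mem_singleton_iff]
  · intro h
    apply List.ext_getElem (by simp [hc])
    intro i hi1 hi2
    have hin : i < n := by simpa using hi1
    have hA := h (Sum.inl (z - i)) (Or.inl ⟨i, hin, rfl⟩)
    have hS := h (Sum.inr (z - i)) (Or.inr ⟨i, hin, rfl⟩)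
    simp only [Sum.elim_inl, Sum.elim_inr, Set.mem_preimage, Bs, Set.mem_singleton_iff] at hA hS
    have hzi : (z - (z - (i:ℤ))).toNat = i := by omega
    rw [hzi] at hA hS
    rw [obs_getElem A S n z ω i hin]
    rw [List.getD_eq_getElem c default hi2] at hA hS
    rw [letterF_eq_iff A S hA01 hS01]
    exact ⟨hA, hS⟩

lemma atom_measurable (hAmeas : ∀ i, Measurable (A i)) (hSmeas : ∀ i, Measurable (S i))
    (hA01 : ∀ i ω, A i ω = 0 ∨ A i ω = 1) (hS01 : ∀ i ω, S i ω = 0 ∨ S i ω = 1)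
    (n : ℕ) (z : ℤ) (c : List L) (hc : c.length = n) :
    MeasurableSet {ω | obs A S n z ω = c} := by
  rw [atom_eq_iInter A S hA01 hS01 n z c hc]
  apply Finset.measurableSet_biInter
  intro k _
  rcases k with y | y
  · exact (hAmeas y) (measurableSet_singleton _)
  · exact (hSmeas y) (measurableSet_singleton _)
lemma wt_eq_prod (c : List L) :
    wt p1 p2 c = ∏ i ∈ Finset.range c.length, w p1 p2 (c.getD i default) := by
  induction c with
  | nil => simp [wt]
  | cons l d ih =>
    rw [wt_cons, List.length_cons, Finset.prod_range_succ']
    simp only [List.getD_cons_succ, List.getD_cons_zero]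
    rw [← ih]
    ring

lemma measure_A_fac (hA01 : ∀ i ω, A i ω = 0 ∨ A i ω = 1) (hAmeas : ∀ i, Measurable (A i))
    (hρ1a : 0 ≤ p1)
    (hAdens : ∀ i, μ {ω | A i ω = 1} = ENNReal.ofReal p1) (b : Bool) (y : ℤ) :
    μ (A y ⁻¹' {if b then 1 else 0}) = ENNReal.ofReal (if b then p1 else 1 - p1) := by
  have h1 : A y ⁻¹' {1} = {ω | A y ω = 1} := by ext ω; simp
  cases b
  · have h0 : A y ⁻¹' {(if false then (1:ℤ) else 0)} = {ω | A y ω = 1}ᶜ := by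
      ext ω
      rcases hA01 y ω with h | h <;> simp [h]
    have hms : MeasurableSet {ω | A y ω = 1} := by
      rw [← h1]; exact (hAmeas y) (measurableSet_singleton 1)
    rw [h0, prob_compl_eq_one_sub hms, hAdens y, if_neg Bool.false_ne_true,
      ENNReal.ofReal_sub 1 hρ1a, ENNReal.ofReal_one]
  · rw [if_pos rfl, if_pos rfl, h1, hAdens y]

lemma measure_S_fac (hS01 : ∀ i ω, S i ω = 0 ∨ S i ω = 1) (hSmeas : ∀ i, Measurable (S i))
    (hρ2a : 0 ≤ p2)
    (hSdens : ∀ i, μ {ω | S i ω = 1} = ENNReal.ofReal p2) (b : Bool) (y : ℤ) :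
    μ (S y ⁻¹' {if b then 1 else 0}) = ENNReal.ofReal (if b then p2 else 1 - p2) := by
  have h1 : S y ⁻¹' {1} = {ω | S y ω = 1} := by ext ω; simp
  cases b
  · have h0 : S y ⁻¹' {(if false then (1:ℤ) else 0)} = {ω | S y ω = 1}ᶜ := by
      ext ω
      rcases hS01 y ω with h | h <;> simp [h]
    have hms : MeasurableSet {ω | S y ω = 1} := by
      rw [← h1]; exact (hSmeas y) (measurableSet_singleton 1)
    rw [h0, prob_compl_eq_one_sub hms, hSdens y, if_neg Bool.false_ne_true,
      ENNReal.ofReal_sub 1 hρ2a, ENNReal.ofReal_one]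
  · rw [if_pos rfl, if_pos rfl, h1, hSdens y]

lemma atom_measure
    (hindep : iIndepFun (Sum.elim A S) μ)
    (hA01 : ∀ i ω, A i ω = 0 ∨ A i ω = 1) (hS01 : ∀ i ω, S i ω = 0 ∨ S i ω = 1)
    (hAmeas : ∀ i, Measurable (A i)) (hSmeas : ∀ i, Measurable (S i))
    (hAdens : ∀ i, μ {ω | A i ω = 1} = ENNReal.ofReal p1)
    (hSdens : ∀ i, μ {ω | S i ω = 1} = ENNReal.ofReal p2)
    (h1 : 0 < p1) (h12 : p1 < p2) (h2 : p2 < 1)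
    (n : ℕ) (z : ℤ) (c : List L) (hc : c.length = n) :
    μ {ω | obs A S n z ω = c} = ENNReal.ofReal (wt p1 p2 c) := by
  rw [atom_eq_iInter A S hA01 hS01 n z c hc]
  have hsets : ∀ k ∈ blk n z, MeasurableSet (Bs z c k) := by
    intro k _
    rcases k with y | y <;> exact measurableSet_singleton _
  rw [hindep.measure_inter_preimage_eq_mul (blk n z) hsets, blk, Finset.prod_union ?hdisj]
  case hdisj =>
    rw [Finset.disjoint_left]
    rintro k hk hk'
    simp only [Finset.mem_image, Finset.mem_range] at hk hk'
    obtain ⟨i, _, rfl⟩ := hk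
    obtain ⟨i', _, h⟩ := hk'
    exact Sum.inl_ne_inr (h.symm)
  rw [Finset.prod_image (by intro a _ b _ h; simp only [Sum.inl.injEq] at h; omega),
    Finset.prod_image (by intro a _ b _ h; simp only [Sum.inr.injEq] at h; omega)]
  have eA : ∀ i ∈ Finset.range n, μ (Sum.elim A S (Sum.inl (z - (i:ℤ))) ⁻¹' Bs z c (Sum.inl (z - (i:ℤ))))
      = ENNReal.ofReal (if (c.getD i default).1 then p1 else 1 - p1) := by
    intro i hi
    have hzi : (z - (z - (i:ℤ))).toNat = i := by omega
    show μ (A (z - (i:ℤ)) ⁻¹' {if (c.getD (z - (z - (i:ℤ))).toNat default).1 then 1 else 0}) = _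
    rw [hzi]
    exact measure_A_fac _ μ A hA01 hAmeas h1.le hAdens _ _
  have eS : ∀ i ∈ Finset.range n, μ (Sum.elim A S (Sum.inr (z - (i:ℤ))) ⁻¹' Bs z c (Sum.inr (z - (i:ℤ))))
      = ENNReal.ofReal (if (c.getD i default).2 then p2 else 1 - p2) := by
    intro i hi
    have hzi : (z - (z - (i:ℤ))).toNat = i := by omega
    show μ (S (z - (i:ℤ)) ⁻¹' {if (c.getD (z - (z - (i:ℤ))).toNat default).2 then 1 else 0}) = _
    rw [hzi]
    exact measure_S_fac _ μ S hS01 hSmeas (by linarith) hSdens _ _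
  rw [Finset.prod_congr rfl eA, Finset.prod_congr rfl eS,
    ← ENNReal.ofReal_prod_of_nonneg (by intro i _; split <;> nlinarith),
    ← ENNReal.ofReal_prod_of_nonneg (by intro i _; split <;> nlinarith),
    ← ENNReal.ofReal_mul (Finset.prod_nonneg (by intro i _; split <;> nlinarith)),
    ← Finset.prod_mul_distrib]
  congr 1
  rw [wt_eq_prod, hc]
  exact Finset.prod_congr rfl (fun i _ => rfl)

lemma cyl_eq_union (n : ℕ) (z : ℤ) (P : List L → Prop) :
    {ω | P (obs A S n z ω)} = ⋃ c ∈ (words n).filter P, {ω | obs A S n z ω = c} := by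
  ext ω
  simp only [Set.mem_setOf_eq, Set.mem_iUnion, Finset.mem_filter]
  constructor
  · intro h
    exact ⟨obs A S n z ω, ⟨obs_mem_words A S n z ω, h⟩, rfl⟩
  · rintro ⟨c, ⟨-, hP⟩, h⟩
    have h' : obs A S n z ω = c := h
    rw [h']
    exact hP

lemma cyl_measurable (hAmeas : ∀ i, Measurable (A i)) (hSmeas : ∀ i, Measurable (S i))
    (hA01 : ∀ i ω, A i ω = 0 ∨ A i ω = 1) (hS01 : ∀ i ω, S i ω = 0 ∨ S i ω = 1)
    (n : ℕ) (z : ℤ) (P : List L → Prop) :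
    MeasurableSet {ω | P (obs A S n z ω)} := by
  rw [cyl_eq_union A S n z P]
  refine Set.Finite.measurableSet_biUnion (Finset.finite_toSet _) ?_
  intro c hc
  have hc' : c ∈ (words n).filter P := hc
  exact atom_measurable A S hAmeas hSmeas hA01 hS01 n z c
    (mem_words.1 (Finset.mem_filter.1 hc').1)

lemma cyl_measure
    (hindep : iIndepFun (Sum.elim A S) μ)
    (hA01 : ∀ i ω, A i ω = 0 ∨ A i ω = 1) (hS01 : ∀ i ω, S i ω = 0 ∨ S i ω = 1)
    (hAmeas : ∀ i, Measurable (A i)) (hSmeas : ∀ i, Measurable (S i))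
    (hAdens : ∀ i, μ {ω | A i ω = 1} = ENNReal.ofReal p1)
    (hSdens : ∀ i, μ {ω | S i ω = 1} = ENNReal.ofReal p2)
    (h1 : 0 < p1) (h12 : p1 < p2) (h2 : p2 < 1)
    (n : ℕ) (z : ℤ) (P : List L → Prop) :
    μ {ω | P (obs A S n z ω)}
      = ENNReal.ofReal (WS n (fun c => if P c then wt p1 p2 c else 0)) := by
  rw [cyl_eq_union A S n z P]
  rw [measure_biUnion_finset ?hdisj ?hmeas]
  case hdisj =>
    intro c hc c' hc' hne
    rw [Function.onFun]
    rw [Set.disjoint_left]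
    intro ω h1' h2'
    rw [Set.mem_setOf_eq] at h1' h2'
    exact hne (h1' ▸ h2' ▸ rfl)
  case hmeas =>
    intro c hc
    rw [Finset.mem_filter] at hc
    exact atom_measurable A S hAmeas hSmeas hA01 hS01 n z c (mem_words.1 hc.1)
  have e : ∀ c ∈ (words n).filter P, μ {ω | obs A S n z ω = c} = ENNReal.ofReal (wt p1 p2 c) := by
    intro c hc
    rw [Finset.mem_filter] at hc
    exact atom_measure _ _ μ A S hindep hA01 hS01 hAmeas hSmeas hAdens hSdens h1 h12 h2 n z c
      (mem_words.1 hc.1)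
  rw [Finset.sum_congr rfl e,
    ← ENNReal.ofReal_sum_of_nonneg (fun c _ => wt_nonneg p1 p2 h1 h12 h2 c)]
  congr 1
  rw [WS, Finset.sum_filter]

lemma xx_letter (hA01 : ∀ i ω, A i ω = 0 ∨ A i ω = 1)
    (hS01 : ∀ i ω, S i ω = 0 ∨ S i ω = 1) (ω : Ω) (z : ℤ) :
    (xx (letterF A S ω z) : ℤ) = A z ω - S z ω := by
  rcases hA01 z ω with h | h <;> rcases hS01 z ω with h' | h' <;> simp [letterF, xx, h, h']

lemma T_obs (hA01 : ∀ i ω, A i ω = 0 ∨ A i ω = 1)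
    (hS01 : ∀ i ω, S i ω = 0 ∨ S i ω = 1) (k : ℕ) (z : ℤ) (ω : Ω) :
    T (obs A S k z ω) = ∑ i ∈ Finset.Icc (z - k + 1) z, (A i ω - S i ω) := by
  induction k generalizing z with
  | zero =>
    rw [show obs A S 0 z ω = [] from rfl, T_nil, Finset.Icc_eq_empty (by push_cast; omega),
      Finset.sum_empty]
  | succ k ih =>
    rw [obs_succ, T_cons, ih, xx_letter A S hA01 hS01 ω z]
    have hins : Finset.Icc (z - ((k:ℤ)+1) + 1) z = insert z (Finset.Icc (z - 1 - (k:ℤ) + 1) (z - 1)) := by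
      ext i
      simp only [Finset.mem_Icc, Finset.mem_insert]
      omega
    rw [show ((((k:ℕ)+1 : ℕ)) : ℤ) = (k:ℤ)+1 from by push_cast; ring, hins,
      Finset.sum_insert (by simp only [Finset.mem_Icc]; omega)]

lemma Low_obs_iff (n : ℕ) (z : ℤ) (ω : Ω) :
    Low (obs A S n z ω) ↔ ∀ k : ℕ, k ≤ n → T (obs A S k z ω) ≤ 0 := by
  constructor
  · intro h k hk
    have := h k
    rwa [obs_take A S n k hk] at this
  · intro h k
    by_cases hk : k ≤ n
    · rw [obs_take A S n k hk]
      exact h k hk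
    · rw [List.take_of_length_le (by rw [obs_length]; omega)]
      exact h n le_rfl

end MeasureSide

end
end USD

open MeasureTheory ProbabilityTheory

/-- In the stationary discrete-time M/M/1 queue, the density of unused services (sites with a
potential service but no departure) equals `ρ² − ρ¹`. -/
theorem unused_service_density {Ω : Type*} [MeasurableSpace Ω] (μ : Measure Ω) [IsProbabilityMeasure μ]
    (A S : ℤ → Ω → ℤ) (ρ1 ρ2 : ℝ)
    (hρ1 : 0 < ρ1) (hρ12 : ρ1 < ρ2) (hρ2 : ρ2 < 1)
    (hA01 : ∀ i ω, A i ω = 0 ∨ A i ω = 1) (hS01 : ∀ i ω, S i ω = 0 ∨ S i ω = 1)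
    (hAmeas : ∀ i, Measurable (A i)) (hSmeas : ∀ i, Measurable (S i))
    (hindep : iIndepFun (Sum.elim A S) μ)
    (hAdens : ∀ i, μ {ω | A i ω = 1} = ENNReal.ofReal ρ1)
    (hSdens : ∀ i, μ {ω | S i ω = 1} = ENNReal.ofReal ρ2) (j : ℤ) :
    μ {ω | S j ω = 1 ∧ Dq (fun i => A i ω) (fun i => S i ω) j = 0} =
      ENNReal.ofReal (ρ2 - ρ1) := by

  classical
  let P : List USD.L → Prop := fun c => ∃ d, c = (false,true) :: d ∧ USD.Low d
  let E : ℕ → Set Ω := fun n => {ω | P (USD.obs A S (n+1) j ω)}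
  have hchar : ∀ n ω, ω ∈ E n ↔ (A j ω = 0 ∧ S j ω = 1 ∧
      ∀ k : ℕ, k ≤ n → (∑ i ∈ Finset.Icc (j - (k:ℤ)) (j-1), (A i ω - S i ω)) ≤ 0) := by
    intro n ω
    show P (USD.obs A S (n+1) j ω) ↔ _
    rw [USD.obs_succ]
    constructor
    · rintro ⟨d, hd, hlow⟩
      obtain ⟨hhead, htail⟩ := List.cons_eq_cons.1 hd
      rw [USD.letterF_eq_iff A S hA01 hS01] at hhead
      refine ⟨by simpa using hhead.1, by simpa using hhead.2, ?_⟩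
      intro k hk
      have hl := (USD.Low_obs_iff A S n (j-1) ω).1 (htail ▸ hlow) k hk
      rw [USD.T_obs A S hA01 hS01 k (j-1) ω,
        show j - 1 - (k:ℤ) + 1 = j - k from by ring] at hl
      exact hl
    · rintro ⟨hA, hS, hsum⟩
      refine ⟨USD.obs A S n (j-1) ω, ?_, ?_⟩
      · congr 1
        rw [USD.letterF_eq_iff A S hA01 hS01]
        exact ⟨by simpa using hA, by simpa using hS⟩
      · rw [USD.Low_obs_iff]
        intro k hk
        rw [USD.T_obs A S hA01 hS01 k (j-1) ω,
          show j - 1 - (k:ℤ) + 1 = j - k from by ring]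
        exact hsum k hk
  have htarget : {ω | S j ω = 1 ∧ Dq (fun i => A i ω) (fun i => S i ω) j = 0} = ⋂ n, E n := by
    ext ω
    simp only [Set.mem_iInter, Set.mem_setOf_eq]
    constructor
    · rintro ⟨hS, hD⟩
      unfold Dq at hD
      have hcond : ¬ (S j ω = 1 ∧ 0 < Zq (fun i => A i ω) (fun i => S i ω) (j-1)
          + (((A j ω).toNat : ℕ∞))) := by
        intro hcontra
        rw [if_pos hcontra] at hD
        exact one_ne_zero hD
      have h0 : Zq (fun i => A i ω) (fun i => S i ω) (j-1) + (((A j ω).toNat : ℕ∞)) = 0 := by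
        by_contra hne
        exact hcond ⟨hS, pos_iff_ne_zero.2 hne⟩
      rw [add_eq_zero] at h0
      have hZ := h0.1
      have hA0 : A j ω = 0 := by
        have h2 := h0.2
        rw [Nat.cast_eq_zero, Int.toNat_eq_zero] at h2
        rcases hA01 j ω with h | h
        · exact h
        · omega
      have hsums : ∀ r, r ≤ j - 1 → (∑ i ∈ Finset.Icc r (j-1), (A i ω - S i ω)) ≤ 0 := by
        intro r hr
        have hle : (((∑ i ∈ Finset.Icc r (j-1), (A i ω - S i ω)).toNat : ℕ∞))
            ≤ Zq (fun i => A i ω) (fun i => S i ω) (j-1) := by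
          rw [Zq]
          exact le_iSup₂ (f := fun r (_ : r ∈ Set.Iic (j-1)) =>
            (((∑ i ∈ Finset.Icc r (j-1), (A i ω - S i ω)).toNat : ℕ∞))) r hr
        rw [hZ] at hle
        simpa [Int.toNat_eq_zero] using hle
      intro n
      refine (hchar n ω).2 ⟨hA0, hS, ?_⟩
      intro k hk
      by_cases hk0 : k = 0
      · subst hk0
        rw [Finset.Icc_eq_empty (by push_cast; omega), Finset.sum_empty]
      · exact hsums (j - k) (by omega)
    · intro hall
      obtain ⟨hA0, hS, -⟩ := (hchar 0 ω).1 (hall 0)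
      refine ⟨hS, ?_⟩
      unfold Dq
      rw [if_neg]
      rintro ⟨-, hpos⟩
      have hZ : Zq (fun i => A i ω) (fun i => S i ω) (j-1) = 0 := by
        rw [Zq]
        refine le_antisymm ?_ zero_le
        refine iSup₂_le fun r hr => ?_
        have hrle : r ≤ j - 1 := hr
        set k : ℕ := (j - r).toNat with hk
        have hjk : j - (k:ℤ) = r := by omega
        obtain ⟨-, -, hsum⟩ := (hchar k ω).1 (hall k)
        have hs := hsum k le_rfl
        rw [hjk] at hs
        simpa [Int.toNat_eq_zero] using hs
      rw [hZ] at hpos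
      simp [hA0] at hpos
  have hEmeas : ∀ n, MeasurableSet (E n) := fun n =>
    USD.cyl_measurable A S hAmeas hSmeas hA01 hS01 (n+1) j P
  have hanti : Antitone E := by
    apply antitone_nat_of_succ_le
    intro n ω hω
    obtain ⟨a, b, c⟩ := (hchar (n+1) ω).1 hω
    exact (hchar n ω).2 ⟨a, b, fun k hk => c k (by omega)⟩
  have hlim1 : Filter.Tendsto (μ ∘ E) Filter.atTop (nhds (μ (⋂ n, E n))) :=
    tendsto_measure_iInter_atTop (fun n => (hEmeas n).nullMeasurableSet) hanti
      ⟨0, measure_ne_top μ _⟩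
  have hval : ∀ n, μ (E n) = ENNReal.ofReal (USD.Eq' ρ1 ρ2 n) := by
    intro n
    show μ {ω | P (USD.obs A S (n+1) j ω)} = _
    rw [USD.cyl_measure _ _ μ A S hindep hA01 hS01 hAmeas hSmeas hAdens hSdens hρ1 hρ12 hρ2
      (n+1) j P]
    rfl
  have hlim2 : Filter.Tendsto (μ ∘ E) Filter.atTop (nhds (ENNReal.ofReal (ρ2 - ρ1))) := by
    have h := ENNReal.tendsto_ofReal (USD.tendsto_Eq' ρ1 ρ2 hρ1 hρ12 hρ2)
    exact Filter.Tendsto.congr (fun n => (hval n).symm) h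
  rw [htarget]
  exact tendsto_nhds_unique hlim1 hlim2
end
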